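/- arXiv:1802.02563 — 11 statements merged into one kernel-verified Lean document; each statement's English description precedes it below -/
import Mathlib

section
/- Let E be a finite-dimensional real inner product space and p : E × ℝ₊ → E a map such that p(·,μ) is differentiable for each μ > 0 and p(z,μ) → Π(z) pointwise as μ → 0 for a map Π : E → E (the limit being locally uniform, e.g. with ‖p(z,μ) - Π(z)‖ ≤ C μ). Suppose the derivative D_z p(z,μ) converges to a linear map T* as (z,μ) → (z*,0). Then Π is strictly differentiable at z* with derivative T*. -/
/-!
For fixed `μ > 0`, the mean value inequality on the ball `B(z*, δ)` where `‖D_z p(·, μ) - T*‖ ≤ ε`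
gives `‖p(z₂, μ) - p(z₁, μ) - T*(z₂ - z₁)‖ ≤ ε ‖z₂ - z₁‖`. This bound does not depend on `μ`, so it
survives the limit `μ → 0⁺`, in which `p(·, μ) → Π` pointwise.
-/

open Filter Topology Set Metric

theorem tendsto_nhdsGT_zero_of_norm_sub_le_mul {F : Type*} [SeminormedAddCommGroup F]
    {f : ℝ → F} {a : F} {C : ℝ} (h : ∀ μ, 0 < μ → ‖f μ - a‖ ≤ C * μ) :
    Tendsto f (𝓝[>] 0) (𝓝 a) := by
  have hrate : Tendsto (fun μ : ℝ => C * μ) (𝓝[>] 0) (𝓝 0) := by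
    simpa using tendsto_nhdsWithin_of_tendsto_nhds ((continuous_const_mul C).tendsto 0)
  exact tendsto_iff_norm_sub_tendsto_zero.2 <|
    squeeze_zero' (Eventually.of_forall fun _ => norm_nonneg _)
      (eventually_nhdsWithin_of_forall h) hrate

theorem stmt_5_general {E : Type*} [NormedAddCommGroup E] [InnerProductSpace ℝ E]
    (p : E → ℝ → E) (Pi : E → E) (C : ℝ) (zs : E) (T : E →L[ℝ] E)
    (hdiff : ∀ μ : ℝ, 0 < μ → Differentiable ℝ (fun z => p z μ))
    (hunif : ∀ z : E, ∀ μ : ℝ, 0 < μ → ‖p z μ - Pi z‖ ≤ C * μ)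
    (hconv : ∀ ε > (0 : ℝ), ∃ δ > (0 : ℝ), ∀ z : E, ∀ μ : ℝ, 0 < μ →
      ‖z - zs‖ < δ → μ < δ → ‖fderiv ℝ (fun w => p w μ) z - (T : E →L[ℝ] E)‖ < ε) :
    ∀ ε > (0 : ℝ), ∃ δ > (0 : ℝ), ∀ z₁ z₂ : E, ‖z₁ - zs‖ < δ → ‖z₂ - zs‖ < δ →
      ‖Pi z₂ - Pi z₁ - T (z₂ - z₁)‖ ≤ ε * ‖z₂ - z₁‖ := by
  intro ε hε
  obtain ⟨δ, hδ, hderiv⟩ := hconv ε hε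
  refine ⟨δ, hδ, fun z₁ z₂ h₁ h₂ => ?_⟩
  have hlim (z : E) : Tendsto (p z) (𝓝[>] 0) (𝓝 (Pi z)) :=
    tendsto_nhdsGT_zero_of_norm_sub_le_mul (hunif z)
  have happrox (μ : ℝ) (hμ : μ ∈ Ioo 0 δ) :
      ‖p z₂ μ - p z₁ μ - T (z₂ - z₁)‖ ≤ ε * ‖z₂ - z₁‖ :=
    Convex.norm_image_sub_le_of_norm_fderiv_le' (fun _ _ => (hdiff μ hμ.1).differentiableAt)
      (fun x hx => (hderiv x μ hμ.1 (mem_ball_iff_norm.1 hx) hμ.2).le) (convex_ball zs δ)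
      (mem_ball_iff_norm.2 h₁) (mem_ball_iff_norm.2 h₂)
  exact le_of_tendsto (((hlim z₂).sub (hlim z₁)).sub_const _).norm
    (eventually_of_mem (Ioo_mem_nhdsGT hδ) happrox)

theorem stmt_5 {E : Type*} [NormedAddCommGroup E] [InnerProductSpace ℝ E]
    [FiniteDimensional ℝ E]
    (p : E → ℝ → E) (Pi : E → E) (C : ℝ) (zs : E) (T : E →L[ℝ] E)
    (hdiff : ∀ μ : ℝ, 0 < μ → Differentiable ℝ (fun z => p z μ))
    (hunif : ∀ z : E, ∀ μ : ℝ, 0 < μ → ‖p z μ - Pi z‖ ≤ C * μ)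
    (hconv : ∀ ε > (0 : ℝ), ∃ δ > (0 : ℝ), ∀ z : E, ∀ μ : ℝ, 0 < μ →
      ‖z - zs‖ < δ → μ < δ → ‖fderiv ℝ (fun w => p w μ) z - (T : E →L[ℝ] E)‖ < ε) :
    ∀ ε > (0 : ℝ), ∃ δ > (0 : ℝ), ∀ z₁ z₂ : E, ‖z₁ - zs‖ < δ → ‖z₂ - zs‖ < δ →
      ‖Pi z₂ - Pi z₁ - T (z₂ - z₁)‖ ≤ ε * ‖z₂ - z₁‖ :=
  stmt_5_general p Pi C zs T hdiff hunif hconv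
end

section
/- Let E be a finite-dimensional real inner product space, p : E × ℝ₊ → E with p(·,μ) differentiable for μ > 0 and ‖p(z,μ) - Π(z)‖ ≤ Cμ for all z, μ. If there exist ξ > 1 and constants such that ‖D_z p(z,μ) - T*‖ ≤ K‖(z - z*, μ)‖^{ξ-1} near (z*,0), then ‖Π(z* + h) - Π(z*) - T*[h]‖ = O(‖h‖^ξ) as h → 0. -/
/-! Compare `Π` with its smoothing `p(·, μ)` at the scale `μ = ‖h‖ ^ ξ`. Replacing `Π` by `p(·, μ)`
costs `2Cμ = 2C‖h‖ ^ ξ`. On the ball of radius `‖h‖` around `z*` the point `(z - z*, μ)` has norm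
at most `‖h‖` (as `μ ≤ ‖h‖` for `‖h‖ ≤ 1`), so `D_z p(·, μ)` is within `K‖h‖ ^ (ξ - 1)` of `T*`
there, and the mean value inequality bounds the linearisation error of `p(·, μ)` by
`K‖h‖ ^ (ξ - 1) · ‖h‖ = K‖h‖ ^ ξ`. -/

open Metric

theorem norm_sub_sub_le_of_forall_norm_sub_le {α F : Type*} [SeminormedAddCommGroup F]
    {f g : α → F} {ε : ℝ} (hfg : ∀ z, ‖g z - f z‖ ≤ ε) (x y : α) (v : F) :
    ‖f x - f y - v‖ ≤ ‖g x - g y - v‖ + 2 * ε := by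
  have hsplit : f x - f y - v = (g x - g y - v) - (g x - f x) + (g y - f y) := by abel
  calc ‖f x - f y - v‖ ≤ ‖g x - g y - v‖ + ‖g x - f x‖ + ‖g y - f y‖ := by
        rw [hsplit]
        exact (norm_add_le _ _).trans (add_le_add_left (norm_sub_le _ _) _)
    _ ≤ ‖g x - g y - v‖ + ε + ε := by gcongr <;> exact hfg _
    _ = ‖g x - g y - v‖ + 2 * ε := by ring

theorem norm_sub_sub_apply_le_of_norm_fderiv_sub_le {E F : Type*}
    [NormedAddCommGroup E] [NormedSpace ℝ E] [NormedAddCommGroup F] [NormedSpace ℝ F]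
    {f : E → F} (hf : Differentiable ℝ f) {T : E →L[ℝ] F} {x₀ h : E} {M : ℝ}
    (hM : ∀ x ∈ closedBall x₀ ‖h‖, ‖fderiv ℝ f x - T‖ ≤ M) :
    ‖f (x₀ + h) - f x₀ - T h‖ ≤ M * ‖h‖ := by
  simpa using (convex_closedBall x₀ ‖h‖).norm_image_sub_le_of_norm_fderiv_le' (y := x₀ + h)
    (fun x _ => hf.differentiableAt) hM (mem_closedBall_self (norm_nonneg h))
    (mem_closedBall.mpr (by simp [dist_eq_norm]))

theorem mul_norm_prod_rpow_le_max_mul_rpow {E : Type*} [SeminormedAddCommGroup E]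
    {x : E} {t r K a : ℝ} (ha : 0 ≤ a) (hx : ‖x‖ ≤ r) (ht : |t| ≤ r) :
    K * ‖(x, t)‖ ^ a ≤ max K 0 * r ^ a := by
  have hxt : ‖(x, t)‖ ≤ r := by
    rw [Prod.norm_def, Real.norm_eq_abs]
    exact max_le hx ht
  calc K * ‖(x, t)‖ ^ a ≤ max K 0 * ‖(x, t)‖ ^ a := by gcongr; exact le_max_left _ _
    _ ≤ max K 0 * r ^ a := by gcongr

theorem stmt_6_general {E : Type*} [NormedAddCommGroup E] [InnerProductSpace ℝ E]
    (p : E → ℝ → E) (Pi : E → E) (C : ℝ) (zs : E) (T : E →L[ℝ] E) (ξ : ℝ) (hξ : 1 < ξ)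
    (hdiff : ∀ μ : ℝ, 0 < μ → Differentiable ℝ (fun z => p z μ))
    (hunif : ∀ z : E, ∀ μ : ℝ, 0 < μ → ‖p z μ - Pi z‖ ≤ C * μ)
    (hrate : ∃ K δ₀ : ℝ, 0 < δ₀ ∧ ∀ z : E, ∀ μ : ℝ, 0 < μ → ‖z - zs‖ < δ₀ → μ < δ₀ →
      ‖fderiv ℝ (fun w => p w μ) z - (T : E →L[ℝ] E)‖
        ≤ K * ‖((z - zs, μ) : E × ℝ)‖ ^ (ξ - 1)) :
    ∃ C' δ : ℝ, 0 < δ ∧ ∀ h : E, ‖h‖ < δ →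
      ‖Pi (zs + h) - Pi zs - T h‖ ≤ C' * ‖h‖ ^ ξ := by
  obtain ⟨K, δ₀, hδ₀, hK⟩ := hrate
  refine ⟨max K 0 + 2 * C, min 1 δ₀, lt_min one_pos hδ₀, fun h hh => ?_⟩
  rcases eq_or_ne h 0 with rfl | hne
  · simp [Real.zero_rpow (by linarith : ξ ≠ 0)]
  have hh1 : ‖h‖ < 1 := hh.trans_le (min_le_left _ _)
  have hhδ : ‖h‖ < δ₀ := hh.trans_le (min_le_right _ _)
  set μ := ‖h‖ ^ ξ
  have hμ : 0 < μ := Real.rpow_pos_of_pos (norm_pos_iff.mpr hne) ξ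
  have hμh : μ ≤ ‖h‖ := Real.rpow_le_self_of_le_one (norm_nonneg h) hh1.le hξ.le
  have hderiv : ∀ x ∈ closedBall zs ‖h‖,
      ‖fderiv ℝ (fun w => p w μ) x - T‖ ≤ max K 0 * ‖h‖ ^ (ξ - 1) := fun x hx => by
    rw [mem_closedBall, dist_eq_norm] at hx
    exact (hK x μ hμ (hx.trans_lt hhδ) (hμh.trans_lt hhδ)).trans
      (mul_norm_prod_rpow_le_max_mul_rpow (by linarith) hx ((abs_of_pos hμ).trans_le hμh))
  calc ‖Pi (zs + h) - Pi zs - T h‖ ≤ ‖p (zs + h) μ - p zs μ - T h‖ + 2 * (C * μ) :=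
        norm_sub_sub_le_of_forall_norm_sub_le (fun z => hunif z μ hμ) _ _ _
    _ ≤ max K 0 * ‖h‖ ^ (ξ - 1) * ‖h‖ + 2 * (C * μ) := by
        gcongr
        exact norm_sub_sub_apply_le_of_norm_fderiv_sub_le (hdiff μ hμ) hderiv
    _ = (max K 0 + 2 * C) * ‖h‖ ^ ξ := by
        rw [mul_assoc, ← Real.rpow_add_one (norm_ne_zero_iff.mpr hne), sub_add_cancel]
        ring

theorem stmt_6 {E : Type*} [NormedAddCommGroup E] [InnerProductSpace ℝ E]
    [FiniteDimensional ℝ E]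
    (p : E → ℝ → E) (Pi : E → E) (C : ℝ) (zs : E) (T : E →L[ℝ] E) (ξ : ℝ) (hξ : 1 < ξ)
    (hdiff : ∀ μ : ℝ, 0 < μ → Differentiable ℝ (fun z => p z μ))
    (hunif : ∀ z : E, ∀ μ : ℝ, 0 < μ → ‖p z μ - Pi z‖ ≤ C * μ)
    (hrate : ∃ K δ₀ : ℝ, 0 < δ₀ ∧ ∀ z : E, ∀ μ : ℝ, 0 < μ → ‖z - zs‖ < δ₀ → μ < δ₀ →
      ‖fderiv ℝ (fun w => p w μ) z - (T : E →L[ℝ] E)‖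
        ≤ K * ‖((z - zs, μ) : E × ℝ)‖ ^ (ξ - 1)) :
    ∃ C' δ : ℝ, 0 < δ ∧ ∀ h : E, ‖h‖ < δ →
      ‖Pi (zs + h) - Pi zs - T h‖ ≤ C' * ‖h‖ ^ ξ :=
  stmt_6_general p Pi C zs T ξ hξ hdiff hunif hrate
end

section
/- Let E be a finite-dimensional real inner product space, M : E → E a monotone linear operator (⟨M u, u⟩ ≥ 0 for all u), and D : E → E a self-adjoint linear operator with 0 ≺ D ≺ I (i.e., ⟨Du,u⟩ > 0 and ⟨(I - D)u,u⟩ > 0 for all u ≠ 0). Then the block operator (u,v) ↦ ((I - D)u + Dv, Mu - v) on E × E is invertible. -/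
/-!
If `((I - D) u + D v, M u - v) = 0`, then `v = M u`, and pairing the first component with
`u + v` gives, by symmetry of `D`,
`0 = ⟪(I - D) u, u⟫ + ⟪D v, v⟫ + ⟪M u, u⟫`.
All three terms are nonnegative, so the first one vanishes and `u = 0` by the strict
positivity of `I - D`; hence `v = M u = 0`. An injective endomorphism of a finite-dimensional space is
bijective.
-/

open RealInnerProductSpace

namespace SmoothedNaturalMap

variable {E : Type*} [NormedAddCommGroup E] [InnerProductSpace ℝ E]

/-- `DH_μ`, with `D = Dp_μ(x - y)` and `M = DF(x)`. -/
def jacobian (M D : E →ₗ[ℝ] E) : E × E →ₗ[ℝ] E × E :=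
  ((LinearMap.id - D).coprod D).prod (M.coprod (-LinearMap.id))

@[simp]
lemma jacobian_apply (M D : E →ₗ[ℝ] E) (w : E × E) :
    jacobian M D w = (w.1 - D w.1 + D w.2, M w.1 - w.2) := by
  simp [jacobian, sub_eq_add_neg]

lemma inner_nonneg_of_pos {A : E → E} (hA : ∀ u, u ≠ 0 → 0 < ⟪A u, u⟫) (u : E) :
    0 ≤ ⟪A u, u⟫ := by
  rcases eq_or_ne u 0 with rfl | hu
  · simp
  · exact (hA u hu).le

lemma inner_sub_add_apply_add {D : E →ₗ[ℝ] E} (hD : D.IsSymmetric) (u v : E) :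
    ⟪u - D u + D v, u + v⟫ = ⟪u - D u, u⟫ + ⟪D v, v⟫ + ⟪v, u⟫ := by
  rw [inner_add_left, inner_add_right, inner_add_right, inner_sub_left u (D u) v, hD u v,
    real_inner_comm u (D v), real_inner_comm u v]
  ring

lemma jacobian_injective {M D : E →ₗ[ℝ] E} (hM : ∀ u, 0 ≤ ⟪M u, u⟫) (hDsa : D.IsSymmetric)
    (hD : ∀ u, u ≠ 0 → 0 < ⟪D u, u⟫) (hDI : ∀ u, u ≠ 0 → 0 < ⟪u - D u, u⟫) :
    Function.Injective (jacobian M D) := by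
  rw [← LinearMap.ker_eq_bot, LinearMap.ker_eq_bot']
  rintro ⟨u, v⟩ hw
  obtain ⟨h1, h2⟩ := Prod.mk_eq_zero.mp ((jacobian_apply M D (u, v)).symm.trans hw)
  obtain rfl : v = M u := (sub_eq_zero.mp h2).symm
  have hsum : ⟪u - D u, u⟫ + ⟪D (M u), M u⟫ + ⟪M u, u⟫ = 0 := by
    rw [← inner_sub_add_apply_add hDsa, h1, inner_zero_left]
  have hDv := inner_nonneg_of_pos hD (M u)
  have hu : u = 0 := by
    by_contra hu
    linarith [hDI u hu, hM u]
  simp [hu]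

end SmoothedNaturalMap

theorem stmt_7 {E : Type*} [NormedAddCommGroup E] [InnerProductSpace ℝ E]
    [FiniteDimensional ℝ E]
    (M D : E →ₗ[ℝ] E)
    (hM : ∀ u : E, 0 ≤ ⟪M u, u⟫)
    (hDsa : ∀ u v : E, ⟪D u, v⟫ = ⟪u, D v⟫)
    (hD : ∀ u : E, u ≠ 0 → 0 < ⟪D u, u⟫)
    (hDI : ∀ u : E, u ≠ 0 → 0 < ⟪u - D u, u⟫) :
    Function.Bijective (fun w : E × E => (w.1 - D w.1 + D w.2, M w.1 - w.2)) := by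
  have hinj := SmoothedNaturalMap.jacobian_injective hM hDsa hD hDI
  rw [← funext (SmoothedNaturalMap.jacobian_apply M D)]
  exact ⟨hinj, LinearMap.injective_iff_surjective.mp hinj⟩
end

section
/- Let E be a finite-dimensional real inner product space, M a linear operator on E with ⟨M u, u⟩ ≥ ϱ‖u‖² for some ϱ > 0 and ‖M‖ ≤ m, and D a self-adjoint linear operator with 0 ≺ D ≼ I. Then for all u ∈ E, ‖u - Du + D M u‖ ≥ (ϱ/(1 + m + ϱ)) ‖u‖. -/
/-!
Pair `w = u - D u + D (M u)` with `u + M u`: by symmetry of `D` the cross terms cancel and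
`⟪w, u + M u⟫ = (‖u‖² - ⟪D u, u⟫) + ⟪M u, u⟫ + ⟪D (M u), M u⟫ ≥ ϱ ‖u‖²`, since `D ≼ I` and `D ⪰ 0`.
Cauchy–Schwarz with `‖u + M u‖ ≤ (1 + m) ‖u‖` gives `‖w‖ ≥ ϱ / (1 + m) ‖u‖`.
-/

open RealInnerProductSpace

section

variable {E : Type*} [NormedAddCommGroup E] [InnerProductSpace ℝ E]

theorem LinearMap.IsSymmetric.inner_sub_add_apply_add {D : E →ₗ[ℝ] E} (hD : D.IsSymmetric)
    (u v : E) :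
    ⟪u - D u + D v, u + v⟫ = (‖u‖ ^ 2 - ⟪D u, u⟫) + ⟪v, u⟫ + ⟪D v, v⟫ := by
  have hcross : ⟪D v, u⟫ = ⟪D u, v⟫ := by rw [hD, real_inner_comm]
  simp only [inner_add_left, inner_add_right, inner_sub_left, hcross,
    real_inner_comm u v, real_inner_self_eq_norm_sq]
  ring

theorem norm_add_apply_le_one_add_mul (M : E →L[ℝ] E) {m : ℝ} (hm : ‖M‖ ≤ m) (u : E) :
    ‖u + M u‖ ≤ (1 + m) * ‖u‖ :=
  calc ‖u + M u‖ ≤ ‖u‖ + ‖M u‖ := norm_add_le _ _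
    _ ≤ ‖u‖ + m * ‖u‖ := by gcongr; exact M.le_of_opNorm_le hm u
    _ = (1 + m) * ‖u‖ := by ring

theorem div_mul_norm_le_of_mul_sq_le_inner {c K : ℝ} (hK : 0 < K) {u w x : E}
    (hinner : c * ‖u‖ ^ 2 ≤ ⟪w, x⟫) (hx : ‖x‖ ≤ K * ‖u‖) :
    c / K * ‖u‖ ≤ ‖w‖ := by
  rcases (norm_nonneg u).eq_or_lt with hu | hu
  · rw [← hu, mul_zero]
    exact norm_nonneg w
  have : c * ‖u‖ ^ 2 ≤ ‖w‖ * (K * ‖u‖) :=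
    calc c * ‖u‖ ^ 2 ≤ ⟪w, x⟫ := hinner
      _ ≤ ‖w‖ * ‖x‖ := real_inner_le_norm w x
      _ ≤ ‖w‖ * (K * ‖u‖) := by gcongr
  rw [div_mul_eq_mul_div, div_le_iff₀ hK]
  nlinarith

end

theorem stmt_8_general {E : Type*} [NormedAddCommGroup E] [InnerProductSpace ℝ E]
    (M : E →L[ℝ] E) (D : E →ₗ[ℝ] E) (ϱ m : ℝ) (hϱ : 0 < ϱ)
    (hM : ∀ u : E, ϱ * ‖u‖ ^ 2 ≤ ⟪M u, u⟫)
    (hm : ‖M‖ ≤ m)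
    (hDsa : ∀ u v : E, ⟪D u, v⟫ = ⟪u, D v⟫)
    (hD : ∀ u : E, u ≠ 0 → 0 < ⟪D u, u⟫)
    (hDI : ∀ u : E, ⟪D u, u⟫ ≤ ‖u‖ ^ 2) :
    ∀ u : E, ϱ / (1 + m + ϱ) * ‖u‖ ≤ ‖u - D u + D (M u)‖ := by
  intro u
  have h1m : 0 < 1 + m := by linarith [(norm_nonneg M).trans hm]
  have hDnonneg : 0 ≤ ⟪D (M u), M u⟫ := by
    rcases eq_or_ne (M u) 0 with h | h
    · simp [h]
    · exact (hD _ h).le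
  have hinner : ϱ * ‖u‖ ^ 2 ≤ ⟪u - D u + D (M u), u + M u⟫ := by
    rw [LinearMap.IsSymmetric.inner_sub_add_apply_add hDsa]
    linarith [hDI u, hM u]
  calc ϱ / (1 + m + ϱ) * ‖u‖ ≤ ϱ / (1 + m) * ‖u‖ := by
        gcongr ?_ * _
        exact div_le_div_of_nonneg_left hϱ.le h1m (le_add_of_nonneg_right hϱ.le)
    _ ≤ ‖u - D u + D (M u)‖ :=
      div_mul_norm_le_of_mul_sq_le_inner h1m hinner (norm_add_apply_le_one_add_mul M hm u)

theorem stmt_8 {E : Type*} [NormedAddCommGroup E] [InnerProductSpace ℝ E]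
    [FiniteDimensional ℝ E]
    (M : E →L[ℝ] E) (D : E →ₗ[ℝ] E) (ϱ m : ℝ) (hϱ : 0 < ϱ)
    (hM : ∀ u : E, ϱ * ‖u‖ ^ 2 ≤ ⟪M u, u⟫)
    (hm : ‖M‖ ≤ m)
    (hDsa : ∀ u v : E, ⟪D u, v⟫ = ⟪u, D v⟫)
    (hD : ∀ u : E, u ≠ 0 → 0 < ⟪D u, u⟫)
    (hDI : ∀ u : E, ⟪D u, u⟫ ≤ ‖u‖ ^ 2) :
    ∀ u : E, ϱ / (1 + m + ϱ) * ‖u‖ ≤ ‖u - D u + D (M u)‖ :=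
  stmt_8_general M D ϱ m hϱ hM hm hDsa hD hDI
end

section
/- Fix μ > 0 and z_o ∈ ℝ, z ∈ ℝⁿ. Consider the system: t - ∑ᵢ 2μ²t/(t² - xᵢ²) = z_o, xᵢ + 2μ²xᵢ/(t² - xᵢ²) = zᵢ for each i, and t > |xᵢ| for all i. For any solution (t,x), each xᵢ has the same sign as zᵢ and |xᵢ| ≤ min(t, |zᵢ|). -/
/-! Each equation says z i = x i * (1 + 2 μ² / (t² - x i²)), and the factor is at least 1
because t² - x i² ≥ 0 on the cone. -/

lemma Real.sign_mul_of_pos (x : ℝ) {k : ℝ} (hk : 0 < k) : Real.sign (x * k) = Real.sign x := by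
  rcases lt_trichotomy x 0 with hx | rfl | hx
  · rw [Real.sign_of_neg hx, Real.sign_of_neg (mul_neg_of_neg_of_pos hx hk)]
  · rw [zero_mul]
  · rw [Real.sign_of_pos hx, Real.sign_of_pos (mul_pos hx hk)]

lemma abs_le_abs_mul_of_one_le (x : ℝ) {k : ℝ} (hk : 1 ≤ k) : |x| ≤ |x * k| := by
  rw [abs_mul, abs_of_pos (zero_lt_one.trans_le hk)]
  exact le_mul_of_one_le_right (abs_nonneg x) hk

theorem stmt_11_general {n : ℕ} (μ : ℝ) (z : Fin n → ℝ)
    (t : ℝ) (x : Fin n → ℝ)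
    (hx : ∀ i, x i + 2 * μ ^ 2 * x i / (t ^ 2 - x i ^ 2) = z i)
    (hlt : ∀ i, |x i| < t) :
    ∀ i, Real.sign (x i) = Real.sign (z i) ∧ |x i| ≤ min t |z i| := by
  intro i
  have hd : 0 ≤ t ^ 2 - x i ^ 2 :=
    sub_nonneg.2 (sq_le_sq.2 ((hlt i).le.trans (le_abs_self t)))
  have hk : 1 ≤ 1 + 2 * μ ^ 2 / (t ^ 2 - x i ^ 2) :=
    le_add_of_nonneg_right (div_nonneg (by positivity) hd)
  have hz : z i = x i * (1 + 2 * μ ^ 2 / (t ^ 2 - x i ^ 2)) := by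
    rw [← hx i]; ring
  rw [hz, Real.sign_mul_of_pos _ (zero_lt_one.trans_le hk)]
  exact ⟨rfl, le_min (hlt i).le (abs_le_abs_mul_of_one_le _ hk)⟩

theorem stmt_11 {n : ℕ} (μ zo : ℝ) (z : Fin n → ℝ) (hμ : 0 < μ)
    (t : ℝ) (x : Fin n → ℝ)
    (ht : t - ∑ i, 2 * μ ^ 2 * t / (t ^ 2 - x i ^ 2) = zo)
    (hx : ∀ i, x i + 2 * μ ^ 2 * x i / (t ^ 2 - x i ^ 2) = z i)
    (hlt : ∀ i, |x i| < t) :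
    ∀ i, Real.sign (x i) = Real.sign (z i) ∧ |x i| ≤ min t |z i| :=
  stmt_11_general μ z t x hx hlt
end

section
/- Let (z_o*, z*) ∈ ℝ × ℝⁿ with |z*₁| ≥ |z*₂| ≥ ... ≥ |z*ₙ| (after permutation). There exists a unique nonnegative integer k* ∈ {0,...,n} such that |z*_{k*}| > max{ (z_o* + ∑_{i=1}^{k*} |z*ᵢ|)/(k*+1), 0 } ≥ |z*_{k*+1}|, with the conventions |z*₀| = ∞ and |z*_{n+1}| = 0. -/
/-!
Write `θ k = max ((zo + ∑_{i ≤ k} |z i|) / (k + 1)) 0`. Adding the term `a = |z (k+1)|` to the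
numerator and `1` to the denominator does not change whether `a ≤ θ`, so
`|z (k+1)| ≤ θ (k+1) ↔ |z (k+1)| ≤ θ k`. Since `|z|` is decreasing, `|z j| ≤ θ j` then propagates
from `j = k + 1` up to `n`: the indices with `|z j| ≤ θ j` form a final segment of `{1, …, n}`,
and `k*` is the index just below it.
-/

open Finset

noncomputable def threshold (zo : ℝ) (z : ℕ → ℝ) (k : ℕ) : ℝ :=
  max ((zo + ∑ i ∈ Icc 1 k, |z i|) / ((k : ℝ) + 1)) 0

def IsCutoff (n : ℕ) (zo : ℝ) (z : ℕ → ℝ) (k : ℕ) : Prop :=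
  k ≤ n ∧ (0 < k → threshold zo z k < |z k|) ∧ (k < n → |z (k + 1)| ≤ threshold zo z k)

lemma le_max_add_div_add_one_iff {a t c : ℝ} (ha : 0 ≤ a) (hc : 0 < c) :
    a ≤ max ((t + a) / (c + 1)) 0 ↔ a ≤ max (t / c) 0 := by
  rcases ha.eq_or_lt with rfl | ha
  · simp
  · rw [le_max_iff, le_max_iff, le_div_iff₀ (by linarith), le_div_iff₀ hc]
    constructor <;> rintro (h | h) <;> left <;> nlinarith

lemma abs_le_threshold_succ_iff (zo : ℝ) (z : ℕ → ℝ) (k : ℕ) :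
    |z (k + 1)| ≤ threshold zo z (k + 1) ↔ |z (k + 1)| ≤ threshold zo z k := by
  unfold threshold
  rw [sum_Icc_succ_top (Nat.le_add_left 1 k), ← add_assoc, Nat.cast_succ]
  exact le_max_add_div_add_one_iff (abs_nonneg _) (by positivity)

lemma abs_le_threshold_of_lt {n : ℕ} {zo : ℝ} {z : ℕ → ℝ}
    (hz : AntitoneOn (fun i => |z i|) (Set.Icc 1 n)) {k j : ℕ} (hkj : k < j) (hjn : j ≤ n)
    (hk : |z (k + 1)| ≤ threshold zo z k) : |z j| ≤ threshold zo z j := by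
  induction j, Nat.succ_le_of_lt hkj using Nat.le_induction with
  | base => exact (abs_le_threshold_succ_iff zo z k).2 hk
  | succ j hj ih =>
    have hdecr : |z (j + 1)| ≤ |z j| :=
      hz ⟨by omega, by omega⟩ ⟨by omega, hjn⟩ (Nat.le_succ j)
    exact (abs_le_threshold_succ_iff zo z j).2 (hdecr.trans (ih (by omega) (by omega)))

lemma IsCutoff.le {n : ℕ} {zo : ℝ} {z : ℕ → ℝ} (hz : AntitoneOn (fun i => |z i|) (Set.Icc 1 n))
    {k k' : ℕ} (hk : IsCutoff n zo z k) (hk' : IsCutoff n zo z k') : k' ≤ k := by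
  by_contra! hlt
  have hkn : k < n := hlt.trans_le hk'.1
  exact (hk'.2.1 (by omega)).not_ge (abs_le_threshold_of_lt hz hlt hk'.1 (hk.2.2 hkn))

lemma isCutoff_findGreatest (n : ℕ) (zo : ℝ) (z : ℕ → ℝ) :
    IsCutoff n zo z (Nat.findGreatest (fun k => k = 0 ∨ threshold zo z k < |z k|) n) := by
  set P : ℕ → Prop := fun k => k = 0 ∨ threshold zo z k < |z k|
  set K := Nat.findGreatest P n
  have hPK : P K := Nat.findGreatest_spec (Nat.zero_le n) (Or.inl rfl)
  refine ⟨Nat.findGreatest_le n, fun hK => hPK.resolve_left hK.ne', fun hKn => ?_⟩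
  have hnext : ¬P (K + 1) := Nat.findGreatest_is_greatest (Nat.lt_succ_self K) hKn
  simp only [P, not_or, not_lt] at hnext
  exact (abs_le_threshold_succ_iff zo z K).1 hnext.2

theorem stmt_12 (n : ℕ) (zo : ℝ) (z : ℕ → ℝ)
    (hsort : ∀ i j : ℕ, 1 ≤ i → i ≤ j → j ≤ n → |z j| ≤ |z i|) :
    ∃! k : ℕ, k ≤ n ∧
      (0 < k → max ((zo + ∑ i ∈ Finset.Icc 1 k, |z i|) / ((k : ℝ) + 1)) 0 < |z k|) ∧
      (k < n → |z (k + 1)| ≤ max ((zo + ∑ i ∈ Finset.Icc 1 k, |z i|) / ((k : ℝ) + 1)) 0) := by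
  have hz : AntitoneOn (fun i => |z i|) (Set.Icc 1 n) :=
    fun i hi j hj hij => hsort i j hi.1 hij hj.2
  have hK := isCutoff_findGreatest n zo z
  change ∃! k, IsCutoff n zo z k
  exact ⟨_, hK, fun k hk => le_antisymm (hK.le hz hk) (hk.le hz hK)⟩
end

section
/- Fix μ > 0. For the CHKS function p_μ(z) = (z + √(z² + 4μ²))/2 on ℝ, and for any 0 < ν ≤ μ and any z, |p_μ(z) - p_ν(z)| ≤ μ - ν; in particular p is Lipschitz continuous with modulus 1 in the smoothing parameter. -/
/-! The square roots are the moduli of `z + 2μi` and `z + 2νi`, so the reverse triangle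
inequality in `ℂ` bounds their difference by `2 (μ - ν)`; the terms `z / 2` cancel. -/

open Complex in
theorem abs_sqrt_sq_add_sq_sub_sqrt_sq_add_sq_le (z s t : ℝ) :
    |√(z ^ 2 + s ^ 2) - √(z ^ 2 + t ^ 2)| ≤ |s - t| := by
  rw [← norm_add_mul_I, ← norm_add_mul_I]
  calc |‖(z : ℂ) + s * I‖ - ‖(z : ℂ) + t * I‖|
      ≤ ‖((z : ℂ) + s * I) - ((z : ℂ) + t * I)‖ := abs_norm_sub_norm_le _ _
    _ = |s - t| := by
      rw [add_sub_add_left_eq_sub, ← sub_mul, norm_mul, norm_I, mul_one, ← ofReal_sub,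
        norm_real, Real.norm_eq_abs]

theorem stmt_15_general (μ ν z : ℝ) (hνμ : ν ≤ μ) :
    |(z + Real.sqrt (z ^ 2 + 4 * μ ^ 2)) / 2 - (z + Real.sqrt (z ^ 2 + 4 * ν ^ 2)) / 2|
      ≤ μ - ν := by
  have hsqrt := abs_sqrt_sq_add_sq_sub_sqrt_sq_add_sq_le z (2 * μ) (2 * ν)
  rw [mul_pow, mul_pow, ← mul_sub, abs_mul, abs_two, abs_of_nonneg (sub_nonneg.2 hνμ)] at hsqrt
  norm_num at hsqrt
  rw [← sub_div, add_sub_add_left_eq_sub, abs_div, abs_two]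
  linarith

theorem stmt_15 (μ ν z : ℝ) (hν : 0 < ν) (hνμ : ν ≤ μ) :
    |(z + Real.sqrt (z ^ 2 + 4 * μ ^ 2)) / 2 - (z + Real.sqrt (z ^ 2 + 4 * ν ^ 2)) / 2|
      ≤ μ - ν :=
  stmt_15_general μ ν z hνμ
end

section
/- Let f(x) = -log det x on the interior of the positive semidefinite cone S₊ⁿ, so ∇f(x) = -x⁻¹. For μ > 0 and z ∈ Sⁿ (symmetric matrices), the matrix x = (z + (z² + 4μ²I)^{1/2})/2 is positive definite and satisfies x - μ²x⁻¹ = z; that is, it solves the barrier-based smoothing equation x + μ²∇f(x) = z. -/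
open Matrix in
lemma posDef_conj_aux {n : ℕ} {A B : Matrix (Fin n) (Fin n) ℝ} (hA : A.PosDef) (hB : IsUnit B) :
    (Bᴴ * A * B).PosDef := by
  exact hA.conjTranspose_mul_mul_same (Matrix.mulVec_injective_of_isUnit hB)

theorem stmt_16 {n : ℕ} (μ : ℝ) (hμ : 0 < μ) (z s : Matrix (Fin n) (Fin n) ℝ)
    (hz : z.IsHermitian) (hs : s.PosDef) (hsq : s * s = z * z + (4 * μ ^ 2) • 1) :
    ((1 / 2 : ℝ) • (z + s)).PosDef ∧
      (1 / 2 : ℝ) • (z + s) - μ ^ 2 • ((1 / 2 : ℝ) • (z + s))⁻¹ = z := by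
  have hs1 := hs.1
  have hμ2 : (μ : ℝ) ^ 2 ≠ 0 := by positivity
  -- z commutes with s*s
  have hzs2 : z * (s * s) = (s * s) * z := by
    rw [hsq]
    simp [mul_add, add_mul, mul_assoc, Matrix.mul_smul, Matrix.smul_mul]
  -- spectral theorem for s
  set U : Matrix (Fin n) (Fin n) ℝ := (hs1.eigenvectorUnitary : Matrix (Fin n) (Fin n) ℝ) with hU
  set d := hs1.eigenvalues with hd
  have hUU : U * star U = 1 := (Matrix.mem_unitaryGroup_iff).mp hs1.eigenvectorUnitary.2
  have hU'U : star U * U = 1 := (Matrix.mem_unitaryGroup_iff').mp hs1.eigenvectorUnitary.2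
  have hD : star U * s * U = Matrix.diagonal d := by
    have := hs1.conjStarAlgAut_star_eigenvectorUnitary
    simpa [RCLike.ofReal_real_eq_id] using this
  set M := star U * z * U with hM
  have hMD2 : M * (Matrix.diagonal d * Matrix.diagonal d)
      = (Matrix.diagonal d * Matrix.diagonal d) * M := by
    have h1 : M * (Matrix.diagonal d * Matrix.diagonal d) = star U * (z * (s * s)) * U := by
      rw [← hD, hM]
      simp only [Matrix.mul_assoc]
      rw [show U * (star U * (s * (U * (star U * (s * U))))) = s * (s * U) by
        simp only [← Matrix.mul_assoc, hUU, Matrix.one_mul]]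
    have h2 : (Matrix.diagonal d * Matrix.diagonal d) * M = star U * ((s * s) * z) * U := by
      rw [← hD, hM]
      simp only [Matrix.mul_assoc]
      rw [show s * (U * (star U * (s * (U * (star U * (z * U)))))) = s * (s * (z * U)) by
        simp only [← Matrix.mul_assoc, hUU, Matrix.one_mul]]
    rw [h1, h2, hzs2]
  have hdpos : ∀ i, 0 < d i := fun i => hs.eigenvalues_pos i
  have key : ∀ i j, M i j * d j = d i * M i j := by
    intro i j
    have h2 := congrFun (congrFun hMD2 i) j
    simp only [Matrix.diagonal_mul_diagonal, Matrix.mul_diagonal, Matrix.diagonal_mul] at h2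
    rcases eq_or_ne (M i j) 0 with h | h
    · simp [h]
    · have hdd : d j * d j = d i * d i := mul_left_cancel₀ h (by rw [h2]; ring)
      have : d j = d i := by nlinarith [hdpos i, hdpos j]
      rw [this]; ring
  have hMD : M * Matrix.diagonal d = Matrix.diagonal d * M := by
    ext i j
    simp [Matrix.mul_diagonal, Matrix.diagonal_mul, key i j]
  have hcomm : z * s = s * z := by
    have hz' : U * M * star U = z := by
      rw [hM]
      simp only [Matrix.mul_assoc]
      rw [show U * (star U * (z * (U * star U))) = z by
        simp only [← Matrix.mul_assoc, hUU, Matrix.one_mul, Matrix.mul_one]]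
    have hs' : U * Matrix.diagonal d * star U = s := by
      rw [← hD]
      simp only [Matrix.mul_assoc]
      rw [show U * (star U * (s * (U * star U))) = s by
        simp only [← Matrix.mul_assoc, hUU, Matrix.one_mul, Matrix.mul_one]]
    calc z * s = (U * M * star U) * (U * Matrix.diagonal d * star U) := by rw [hz', hs']
      _ = U * (M * Matrix.diagonal d) * star U := by
          simp only [Matrix.mul_assoc]
          rw [show star U * (U * (Matrix.diagonal d * star U))
            = Matrix.diagonal d * star U by
            simp only [← Matrix.mul_assoc, hU'U, Matrix.one_mul]]
      _ = U * (Matrix.diagonal d * M) * star U := by rw [hMD]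
      _ = (U * Matrix.diagonal d * star U) * (U * M * star U) := by
          simp only [Matrix.mul_assoc]
          rw [show star U * (U * (M * star U)) = M * star U by
            simp only [← Matrix.mul_assoc, hU'U, Matrix.one_mul]]
      _ = s * z := by rw [hz', hs']
  -- the key algebraic identity
  set x := (1 / 2 : ℝ) • (z + s) with hx
  have hxz : x - z = (1 / 2 : ℝ) • (s - z) := by rw [hx]; module
  have hkey : x * (x - z) = μ ^ 2 • (1 : Matrix (Fin n) (Fin n) ℝ) := by
    rw [hxz, hx, Matrix.smul_mul, Matrix.mul_smul, smul_smul]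
    have : (z + s) * (s - z) = (4 * μ ^ 2) • (1 : Matrix (Fin n) (Fin n) ℝ) := by
      have e1 : (z + s) * (s - z) = s * s - z * z := by
        rw [add_mul, mul_sub, mul_sub, hcomm]; abel
      rw [e1, hsq]; abel
    rw [this, smul_smul]
    congr 1
    ring
  have hone : x * ((μ ^ 2)⁻¹ • (x - z)) = 1 := by
    rw [Matrix.mul_smul, hkey, smul_smul, inv_mul_cancel₀ hμ2, one_smul]
  have hinv : x⁻¹ = (μ ^ 2)⁻¹ • (x - z) := Matrix.inv_eq_right_inv hone
  have hsecond : x - μ ^ 2 • x⁻¹ = z := by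
    rw [hinv, smul_smul, mul_inv_cancel₀ hμ2, one_smul]
    abel
  refine ⟨?_, hsecond⟩
  -- positivity
  have hxs : x + μ ^ 2 • x⁻¹ = s := by
    rw [hinv, smul_smul, mul_inv_cancel₀ hμ2, one_smul, hx]
    module
  have hxherm : x.IsHermitian := by
    have hzt : z.transpose = z := by simpa using hz.eq
    have hst : s.transpose = s := by simpa using hs1.eq
    rw [hx]
    simp [Matrix.IsHermitian, Matrix.conjTranspose_smul, Matrix.conjTranspose_add, hzt, hst]
  have hxunit : IsUnit x := ⟨⟨x, (μ ^ 2)⁻¹ • (x - z), hone, mul_eq_one_comm.mp hone⟩, rfl⟩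
  set V : Matrix (Fin n) (Fin n) ℝ := (hxherm.eigenvectorUnitary : Matrix (Fin n) (Fin n) ℝ)
    with hV
  set e := hxherm.eigenvalues with he
  have hVV : V * star V = 1 := (Matrix.mem_unitaryGroup_iff).mp hxherm.eigenvectorUnitary.2
  have hV'V : star V * V = 1 := (Matrix.mem_unitaryGroup_iff').mp hxherm.eigenvectorUnitary.2
  have hE : star V * x * V = Matrix.diagonal e := by
    have := hxherm.conjStarAlgAut_star_eigenvectorUnitary
    simpa [RCLike.ofReal_real_eq_id] using this
  have hxspec : x = V * Matrix.diagonal e * star V := by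
    rw [← hE]
    simp only [Matrix.mul_assoc]
    rw [show V * (star V * (x * (V * star V))) = x by
      simp only [← Matrix.mul_assoc, hVV, Matrix.one_mul, Matrix.mul_one]]
  have hene : ∀ i, e i ≠ 0 := by
    have hdet : x.det ≠ 0 := by
      intro h
      exact (Matrix.isUnit_iff_isUnit_det x).mp hxunit |>.ne_zero h
    have := hxherm.det_eq_prod_eigenvalues
    intro i hi
    apply hdet
    rw [this]
    exact Finset.prod_eq_zero (Finset.mem_univ i) (by simpa using hi)
  have hxinv : x⁻¹ = V * Matrix.diagonal (fun i => (e i)⁻¹) * star V := by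
    apply Matrix.inv_eq_right_inv
    rw [hxspec]
    calc V * Matrix.diagonal e * star V * (V * Matrix.diagonal (fun i => (e i)⁻¹) * star V)
        = V * (Matrix.diagonal e * Matrix.diagonal (fun i => (e i)⁻¹)) * star V := by
          simp only [Matrix.mul_assoc]
          rw [show star V * (V * (Matrix.diagonal (fun i => (e i)⁻¹) * star V))
            = Matrix.diagonal (fun i => (e i)⁻¹) * star V by
            simp only [← Matrix.mul_assoc, hV'V, Matrix.one_mul]]
      _ = 1 := by
          rw [Matrix.diagonal_mul_diagonal]
          have : (fun i => e i * (e i)⁻¹) = fun _ => (1 : ℝ) := by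
            funext i; exact mul_inv_cancel₀ (hene i)
          rw [this, Matrix.diagonal_one, Matrix.mul_one, hVV]
  have hsspec : s = V * Matrix.diagonal (fun i => e i + μ ^ 2 * (e i)⁻¹) * star V := by
    rw [← hxs, hxinv, hxspec]
    have hds : Matrix.diagonal (fun i => e i + μ ^ 2 * (e i)⁻¹)
        = Matrix.diagonal e + μ ^ 2 • Matrix.diagonal (fun i => (e i)⁻¹) := by
      ext i j
      rcases eq_or_ne i j with rfl | h
      · simp
      · simp [Matrix.diagonal_apply_ne _ h]
    rw [hds]
    simp only [Matrix.mul_add, Matrix.add_mul, Matrix.mul_smul, Matrix.smul_mul]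
  have hdiagpos : (Matrix.diagonal (fun i => e i + μ ^ 2 * (e i)⁻¹)).PosDef := by
    have hVu : IsUnit V := by
      exact Matrix.isUnit_iff_isUnit_det V |>.mpr
        (IsUnit.of_mul_eq_one _ (by rw [← Matrix.det_mul, hVV, Matrix.det_one]))
    have := posDef_conj_aux hs hVu
    have heq : V.conjTranspose * s * V = Matrix.diagonal (fun i => e i + μ ^ 2 * (e i)⁻¹) := by
      rw [Matrix.star_eq_conjTranspose] at hV'V hVV
      rw [hsspec]
      simp only [Matrix.star_eq_conjTranspose, Matrix.mul_assoc]
      rw [show V.conjTranspose * (V * (Matrix.diagonal (fun i => e i + μ ^ 2 * (e i)⁻¹) * (V.conjTranspose * V)))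
        = Matrix.diagonal (fun i => e i + μ ^ 2 * (e i)⁻¹) by
        simp only [← Matrix.mul_assoc, hV'V, Matrix.one_mul]
        rw [Matrix.mul_one]]
    rwa [heq] at this
  have hepos : ∀ i, 0 < e i := by
    intro i
    have h := Matrix.posDef_diagonal_iff.mp hdiagpos i
    rcases lt_trichotomy (e i) 0 with h1 | h1 | h1
    · exfalso
      have : μ ^ 2 * (e i)⁻¹ < 0 := mul_neg_of_pos_of_neg (by positivity) (by simpa using h1)
      linarith
    · exact absurd h1 (hene i)
    · exact h1
  have hdiagE : (Matrix.diagonal e).PosDef := Matrix.PosDef.diagonal hepos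
  have hVsu : IsUnit (star V) := by
    exact Matrix.isUnit_iff_isUnit_det _ |>.mpr
      (IsUnit.of_mul_eq_one _ (by rw [← Matrix.det_mul, hV'V, Matrix.det_one]))
  have := posDef_conj_aux hdiagE hVsu
  rw [show Matrix.conjTranspose (star V) = V by
    rw [Matrix.star_eq_conjTranspose, Matrix.conjTranspose_conjTranspose]] at this
  rw [hxspec]
  exact this
end

section
/- Let z* ∈ Sⁿ be a symmetric matrix all of whose eigenvalues are nonzero. Then the Euclidean projection Π onto the positive semidefinite cone S₊ⁿ, given by Π(z) = q·Diag(max(λᵢ,0))·qᵀ for any eigendecomposition z = q·Diag(λ)·qᵀ, is differentiable at z*. -/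
open Matrix

attribute [local instance] Matrix.frobeniusSeminormedAddCommGroup
  Matrix.frobeniusNormedAddCommGroup Matrix.frobeniusNormedSpace

namespace Stmt17Aux

open Topology Filter

attribute [local instance] Matrix.frobeniusNormedRing Matrix.frobeniusNormedAlgebra

variable {n : ℕ}

lemma cancel_left {q : Matrix (Fin n) (Fin n) ℝ} (h : qᵀ * q = 1)
    (X : Matrix (Fin n) (Fin n) ℝ) : qᵀ * (q * X) = X := by
  rw [← Matrix.mul_assoc, h, Matrix.one_mul]

lemma cancel_left' {q : Matrix (Fin n) (Fin n) ℝ} (h : q * qᵀ = 1)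
    (X : Matrix (Fin n) (Fin n) ℝ) : q * (qᵀ * X) = X := by
  rw [← Matrix.mul_assoc, h, Matrix.one_mul]

lemma sylvester_inj {q : Matrix (Fin n) (Fin n) ℝ} (hq1 : qᵀ * q = 1)
    (hq : q * qᵀ = 1) {d : Fin n → ℝ} (hd : ∀ i, 0 < d i)
    {H : Matrix (Fin n) (Fin n) ℝ}
    (hH : (q * Matrix.diagonal d * qᵀ) * H + H * (q * Matrix.diagonal d * qᵀ) = 0) :
    H = 0 := by
  set P := q * Matrix.diagonal d * qᵀ with hP
  set K := qᵀ * H * q with hK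
  have hHK : H = q * K * qᵀ := by
    rw [hK]
    simp only [Matrix.mul_assoc, hq, Matrix.mul_one, cancel_left' hq]
  have key : Matrix.diagonal d * K + K * Matrix.diagonal d = 0 := by
    have h0 := congrArg (fun X => qᵀ * X * q) hH
    simp only [Matrix.mul_add, Matrix.add_mul, Matrix.mul_zero, Matrix.zero_mul] at h0
    have e1 : qᵀ * (P * H) * q = Matrix.diagonal d * K := by
      rw [hP, hK]
      simp only [Matrix.mul_assoc, cancel_left hq1]
    have e2 : qᵀ * (H * P) * q = K * Matrix.diagonal d := by
      rw [hP, hK]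
      simp only [Matrix.mul_assoc, hq1, Matrix.mul_one]
    rw [e1, e2] at h0
    exact h0
  have hK0 : K = 0 := by
    ext i j
    have hij := congrFun (congrFun key i) j
    simp only [Matrix.add_apply, Matrix.diagonal_mul, Matrix.mul_diagonal,
      Matrix.zero_apply] at hij
    have hdij : 0 < d i + d j := by have := hd i; have := hd j; linarith
    have h2 : (d i + d j) * K i j = 0 := by rw [add_mul]; linarith [hij]
    rcases mul_eq_zero.mp h2 with h | h
    · exact absurd h (ne_of_gt hdij)
    · simpa using h
  rw [hHK, hK0, Matrix.mul_zero, Matrix.zero_mul]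


lemma quad_lb {q : Matrix (Fin n) (Fin n) ℝ} (hq : q * qᵀ = 1)
    {d : Fin n → ℝ} {c : ℝ} (hc : ∀ i, c ≤ d i) (x : Fin n → ℝ) :
    c * (x ⬝ᵥ x) ≤ x ⬝ᵥ ((q * Matrix.diagonal d * qᵀ) *ᵥ x) := by
  set y := qᵀ *ᵥ x with hy
  have h1 : x ⬝ᵥ ((q * Matrix.diagonal d * qᵀ) *ᵥ x) = y ⬝ᵥ (Matrix.diagonal d *ᵥ y) := by
    rw [← Matrix.mulVec_mulVec, ← Matrix.mulVec_mulVec, Matrix.dotProduct_mulVec x q,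
      ← Matrix.mulVec_transpose, hy]
  have h2 : y ⬝ᵥ y = x ⬝ᵥ x := by
    rw [hy]
    conv_lhs => rw [show (qᵀ *ᵥ x) = x ᵥ* q from Matrix.mulVec_transpose q x]
    rw [← Matrix.dotProduct_mulVec, ← Matrix.mulVec_transpose q x, Matrix.mulVec_mulVec, hq, Matrix.one_mulVec]
  rw [h1, ← h2]
  have h3 : y ⬝ᵥ (Matrix.diagonal d *ᵥ y) = ∑ i, d i * (y i)^2 := by
    simp [Matrix.mulVec_diagonal, dotProduct, mul_comm, sq, mul_assoc, mul_left_comm]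
  have h4 : y ⬝ᵥ y = ∑ i, (y i)^2 := by simp [dotProduct, sq]
  rw [h3, h4, Finset.mul_sum]
  apply Finset.sum_le_sum
  intro i _
  nlinarith [hc i, sq_nonneg (y i)]

lemma quad_ub (M : Matrix (Fin n) (Fin n) ℝ) (x : Fin n → ℝ) :
    |x ⬝ᵥ (M *ᵥ x)| ≤ ‖M‖ * (x ⬝ᵥ x) := by
  have hnorm : ‖M‖ = Real.sqrt (∑ i, ∑ j, (M i j)^2) := by
    rw [Matrix.frobenius_norm_def, Real.sqrt_eq_rpow]
    congr 1
    refine Finset.sum_congr rfl fun i _ => Finset.sum_congr rfl fun j _ => ?_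
    rw [show ((2:ℝ)) = ((2:ℕ):ℝ) by norm_num, Real.rpow_natCast, Real.norm_eq_abs, sq_abs]
  have key : (x ⬝ᵥ (M *ᵥ x))^2 ≤ (∑ i, ∑ j, (M i j)^2) * (x ⬝ᵥ x)^2 := by
    have h1 : x ⬝ᵥ (M *ᵥ x) = ∑ p : Fin n × Fin n, M p.1 p.2 * (x p.1 * x p.2) := by
      rw [Fintype.sum_prod_type]
      simp [dotProduct, Matrix.mulVec, Finset.mul_sum, mul_comm, mul_assoc, mul_left_comm]
    have h2 : (∑ p : Fin n × Fin n, (M p.1 p.2)^2) = ∑ i, ∑ j, (M i j)^2 := by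
      rw [Fintype.sum_prod_type]
    have h3 : (∑ p : Fin n × Fin n, (x p.1 * x p.2)^2) = (x ⬝ᵥ x)^2 := by
      rw [Fintype.sum_prod_type]
      simp [dotProduct, sq, Finset.sum_mul, Finset.mul_sum, mul_comm, mul_assoc, mul_left_comm]
    calc (x ⬝ᵥ (M *ᵥ x))^2
        = (∑ p : Fin n × Fin n, M p.1 p.2 * (x p.1 * x p.2))^2 := by rw [h1]
      _ ≤ (∑ p : Fin n × Fin n, (M p.1 p.2)^2) * (∑ p : Fin n × Fin n, (x p.1 * x p.2)^2) :=
          Finset.sum_mul_sq_le_sq_mul_sq _ _ _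
      _ = (∑ i, ∑ j, (M i j)^2) * (x ⬝ᵥ x)^2 := by rw [h2, h3]
  have hxx : (0:ℝ) ≤ x ⬝ᵥ x := by
    simp only [dotProduct]
    exact Finset.sum_nonneg fun i _ => mul_self_nonneg _
  have hsum : (0:ℝ) ≤ ∑ i, ∑ j, (M i j)^2 :=
    Finset.sum_nonneg fun i _ => Finset.sum_nonneg fun j _ => sq_nonneg _
  rw [hnorm]
  rw [← Real.sqrt_sq_eq_abs]
  calc Real.sqrt ((x ⬝ᵥ (M *ᵥ x))^2)
      ≤ Real.sqrt ((∑ i, ∑ j, (M i j)^2) * (x ⬝ᵥ x)^2) := Real.sqrt_le_sqrt key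
    _ = Real.sqrt (∑ i, ∑ j, (M i j)^2) * (x ⬝ᵥ x) := by
        rw [Real.sqrt_mul hsum, Real.sqrt_sq hxx]


lemma real_spectral (A : Matrix (Fin n) (Fin n) ℝ) (hA : A.IsHermitian) :
    ∃ (q : Matrix (Fin n) (Fin n) ℝ) (lam : Fin n → ℝ),
      q * qᵀ = 1 ∧ A = q * Matrix.diagonal lam * qᵀ := by
  refine ⟨hA.eigenvectorUnitary, hA.eigenvalues, ?_, ?_⟩
  · have := (Matrix.mem_unitaryGroup_iff).mp hA.eigenvectorUnitary.2
    simpa [Matrix.star_eq_conjTranspose, Matrix.conjTranspose_eq_transpose_of_trivial] using this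
  · have := hA.spectral_theorem
    simpa [Matrix.star_eq_conjTranspose, Matrix.conjTranspose_eq_transpose_of_trivial,
      Function.comp] using this

lemma conj_mul {q X Y : Matrix (Fin n) (Fin n) ℝ} (h : qᵀ * q = 1) :
    (q * X * qᵀ) * (q * Y * qᵀ) = q * (X * Y) * qᵀ := by
  have h2 : ∀ Z, qᵀ * (q * Z) = Z := fun Z => by rw [← Matrix.mul_assoc, h, Matrix.one_mul]
  simp only [Matrix.mul_assoc, h2]

lemma conj_transpose_self {q D : Matrix (Fin n) (Fin n) ℝ} (hD : Dᵀ = D) :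
    (q * D * qᵀ)ᵀ = q * D * qᵀ := by
  rw [Matrix.transpose_mul, Matrix.transpose_mul, Matrix.transpose_transpose, hD,
    Matrix.mul_assoc]

lemma conj_isHermitian {q D : Matrix (Fin n) (Fin n) ℝ} (hD : Dᵀ = D) :
    (q * D * qᵀ).IsHermitian := by
  unfold Matrix.IsHermitian
  rw [Matrix.conjTranspose_eq_transpose_of_trivial]
  exact conj_transpose_self hD

lemma conj_posSemidef {q : Matrix (Fin n) (Fin n) ℝ} {d : Fin n → ℝ} (hd : ∀ i, 0 ≤ d i) :
    (q * Matrix.diagonal d * qᵀ).PosSemidef := by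
  have h1 : (Matrix.diagonal d).PosSemidef := Matrix.posSemidef_diagonal_iff.mpr hd
  have := h1.mul_mul_conjTranspose_same q
  rwa [Matrix.conjTranspose_eq_transpose_of_trivial] at this

lemma half_formula {q : Matrix (Fin n) (Fin n) ℝ} (lam : Fin n → ℝ) :
    (2⁻¹ : ℝ) • (q * Matrix.diagonal lam * qᵀ
        + q * Matrix.diagonal (fun i => |lam i|) * qᵀ)
      = q * Matrix.diagonal (fun i => max (lam i) 0) * qᵀ := by
  have h1 : q * Matrix.diagonal lam * qᵀ + q * Matrix.diagonal (fun i => |lam i|) * qᵀ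
      = q * (Matrix.diagonal lam + Matrix.diagonal (fun i => |lam i|)) * qᵀ := by
    rw [Matrix.mul_add, Matrix.add_mul]
  rw [h1, Matrix.diagonal_add]
  rw [← Matrix.smul_mul, ← mul_smul_comm, ← Matrix.diagonal_smul]
  have h2 : (2⁻¹ : ℝ) • (fun i => lam i + |lam i|) = fun i => max (lam i) 0 := by
    funext i
    simp only [Pi.smul_apply, smul_eq_mul]
    rcases le_total (lam i) 0 with h | h
    · rw [abs_of_nonpos h, max_eq_right h]; ring
    · rw [abs_of_nonneg h, max_eq_left h]; ring
  rw [h2]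



lemma sq_deriv (P : Matrix (Fin n) (Fin n) ℝ) :
    HasStrictFDerivAt (fun A : Matrix (Fin n) (Fin n) ℝ => A * A)
      (P • ContinuousLinearMap.id ℝ (Matrix (Fin n) (Fin n) ℝ)
        + (ContinuousLinearMap.id ℝ (Matrix (Fin n) (Fin n) ℝ)).smulRight P) P :=
  (hasStrictFDerivAt_id P).mul' (hasStrictFDerivAt_id P)

lemma L_apply (P H : Matrix (Fin n) (Fin n) ℝ) :
    (P • ContinuousLinearMap.id ℝ (Matrix (Fin n) (Fin n) ℝ)
        + (ContinuousLinearMap.id ℝ (Matrix (Fin n) (Fin n) ℝ)).smulRight P) H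
      = P * H + H * P := by
  simp [smul_eq_mul]

theorem main {n : ℕ}
    (Pi : Matrix (Fin n) (Fin n) ℝ → Matrix (Fin n) (Fin n) ℝ)
    (hPi : ∀ (A q : Matrix (Fin n) (Fin n) ℝ) (lam : Fin n → ℝ),
      A.IsHermitian → q * qᵀ = 1 → A = q * Matrix.diagonal lam * qᵀ →
      Pi A = q * Matrix.diagonal (fun i => max (lam i) 0) * qᵀ)
    (zs : Matrix (Fin n) (Fin n) ℝ) (hzs : zs.IsHermitian)
    (heig : ∀ (q : Matrix (Fin n) (Fin n) ℝ) (lam : Fin n → ℝ),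
      q * qᵀ = 1 → zs = q * Matrix.diagonal lam * qᵀ → ∀ i, lam i ≠ 0) :
    DifferentiableWithinAt ℝ Pi {A : Matrix (Fin n) (Fin n) ℝ | A.IsHermitian} zs := by
  classical
  rcases Nat.eq_zero_or_pos n with hn | hn
  · subst hn
    have hconst : Pi = fun _ => Pi 0 := funext fun A => congrArg Pi (Subsingleton.elim A 0)
    rw [hconst]
    exact differentiableWithinAt_const _
  haveI : Nonempty (Fin n) := Fin.pos_iff_nonempty.mp hn
  obtain ⟨q0, lam0, hq0, hzdec⟩ := real_spectral zs hzs
  have hq0' : q0ᵀ * q0 = 1 := mul_eq_one_comm.mp hq0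
  have hlam0 : ∀ i, lam0 i ≠ 0 := heig q0 lam0 hq0 hzdec
  set d : Fin n → ℝ := fun i => |lam0 i| with hd
  have hdpos : ∀ i, 0 < d i := fun i => abs_pos.mpr (hlam0 i)
  set P : Matrix (Fin n) (Fin n) ℝ := q0 * Matrix.diagonal d * q0ᵀ with hPdef
  set c : ℝ := Finset.univ.inf' Finset.univ_nonempty d with hc
  have hcpos : 0 < c := (Finset.lt_inf'_iff _).mpr fun i _ => hdpos i
  have hcle : ∀ i, c ≤ d i := fun i => Finset.inf'_le _ (Finset.mem_univ i)
  set msq : Matrix (Fin n) (Fin n) ℝ → Matrix (Fin n) (Fin n) ℝ := fun A => A * A with hmsq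
  set L := P • ContinuousLinearMap.id ℝ (Matrix (Fin n) (Fin n) ℝ)
      + (ContinuousLinearMap.id ℝ (Matrix (Fin n) (Fin n) ℝ)).smulRight P with hL
  have hL0 : ∀ H, L H = 0 → H = 0 := by
    intro H h
    have h2 : P * H + H * P = 0 := by rw [← L_apply P H]; exact h
    exact sylvester_inj hq0' hq0 hdpos h2
  have hLinj : Function.Injective L := by
    intro a b hab
    have h1 : L (a - b) = 0 := by rw [map_sub, hab, sub_self]
    exact sub_eq_zero.mp (hL0 _ h1)
  have hLsurj : Function.Surjective (L : Matrix (Fin n) (Fin n) ℝ →ₗ[ℝ] Matrix (Fin n) (Fin n) ℝ) :=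
    LinearMap.injective_iff_surjective.mp hLinj
  set e : Matrix (Fin n) (Fin n) ℝ ≃L[ℝ] Matrix (Fin n) (Fin n) ℝ :=
    (LinearEquiv.ofBijective (L : Matrix (Fin n) (Fin n) ℝ →ₗ[ℝ] Matrix (Fin n) (Fin n) ℝ)
      ⟨hLinj, hLsurj⟩).toContinuousLinearEquiv with he
  have hecoe : (e : Matrix (Fin n) (Fin n) ℝ →L[ℝ] Matrix (Fin n) (Fin n) ℝ) = L := by
    ext H; rfl
  have hsd : HasStrictFDerivAt msq
      (e : Matrix (Fin n) (Fin n) ℝ →L[ℝ] Matrix (Fin n) (Fin n) ℝ) P := by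
    rw [hecoe, hL, hmsq]; exact sq_deriv P
  set Φ := hsd.toOpenPartialHomeomorph msq with hΦ
  have hΦcoe : ⇑Φ = msq := hsd.toOpenPartialHomeomorph_coe
  have hPsrc : P ∈ Φ.source := hsd.mem_toOpenPartialHomeomorph_source
  have hPPtgt : msq P ∈ Φ.target := hsd.image_mem_toOpenPartialHomeomorph_target
  have hgP : Φ.symm (msq P) = P := by
    have h1 := Φ.left_inv hPsrc
    rwa [hΦcoe] at h1
  have hPt : Pᵀ = P := by
    rw [hPdef]; exact conj_transpose_self (Matrix.diagonal_transpose d)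
  have hPP : msq P = msq zs := by
    simp only [hmsq]
    rw [hPdef, conj_mul hq0', hzdec, conj_mul hq0', Matrix.diagonal_mul_diagonal,
      Matrix.diagonal_mul_diagonal]
    congr 2
    funext i
    simp [hd, abs_mul_abs_self]
  obtain ⟨ε, hε, hball⟩ := Metric.isOpen_iff.mp Φ.open_source P hPsrc
  set r : ℝ := min ε c with hr
  have hrpos : 0 < r := lt_min hε hcpos
  have hrball : Metric.ball P r ⊆ Φ.source :=
    (Metric.ball_subset_ball (min_le_left _ _)).trans hball
  have hrc : r ≤ c := min_le_right _ _
  have hgd : HasStrictFDerivAt (⇑Φ.symm)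
      (e.symm : Matrix (Fin n) (Fin n) ℝ →L[ℝ] Matrix (Fin n) (Fin n) ℝ) (msq P) := by
    have h1 := hsd.to_localInverse
    exact h1
  have key : ∀ A : Matrix (Fin n) (Fin n) ℝ, A.IsHermitian → msq A ∈ Φ.target →
      Φ.symm (msq A) ∈ Metric.ball P r →
      Pi A = (2⁻¹ : ℝ) • (A + Φ.symm (msq A)) := by
    intro A hA htgt hbl
    obtain ⟨q, lam, hq, hdec⟩ := real_spectral A hA
    have hq' : qᵀ * q = 1 := mul_eq_one_comm.mp hq
    set S := q * Matrix.diagonal (fun i => |lam i|) * qᵀ with hS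
    set T := Φ.symm (msq A) with hT
    have hTsrc : T ∈ Φ.source := Φ.map_target htgt
    have hTsq : msq T = msq A := by
      have h1 := Φ.right_inv htgt
      rwa [hΦcoe] at h1
    have hTTA : T * T = A * A := by
      have := hTsq
      simp only [hmsq] at this
      exact this
    have hAt : Aᵀ = A := by
      rw [← Matrix.conjTranspose_eq_transpose_of_trivial]; exact hA
    have hblP : ‖T - P‖ < r := by
      rw [Metric.mem_ball, dist_eq_norm] at hbl; exact hbl
    have hTt_ball : Tᵀ ∈ Metric.ball P r := by
      rw [Metric.mem_ball, dist_eq_norm]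
      calc ‖Tᵀ - P‖ = ‖(T - P)ᵀ‖ := by rw [Matrix.transpose_sub, hPt]
        _ = ‖T - P‖ := Matrix.frobenius_norm_transpose _
        _ < r := hblP
    have hTt : Tᵀ = T := by
      apply Φ.injOn (hrball hTt_ball) hTsrc
      show Φ Tᵀ = Φ T
      rw [hΦcoe]
      simp only [hmsq]
      rw [← Matrix.transpose_mul, hTTA, Matrix.transpose_mul, hAt, ← hTTA]
    have hTherm : T.IsHermitian := by
      unfold Matrix.IsHermitian
      rw [Matrix.conjTranspose_eq_transpose_of_trivial]
      exact hTt
    have hTpsd : T.PosSemidef := by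
      refine Matrix.PosDef.posSemidef (Matrix.PosDef.of_dotProduct_mulVec_pos hTherm ?_)
      intro x hx
      have hxx : 0 < x ⬝ᵥ x := by
        obtain ⟨i, hi⟩ := Function.ne_iff.mp hx
        have h2 : 0 < x i * x i := mul_self_pos.mpr hi
        simp only [dotProduct]
        exact Finset.sum_pos' (fun j _ => mul_self_nonneg (x j)) ⟨i, Finset.mem_univ i, h2⟩
      have h1 := quad_lb hq0 hcle x
      have h2 := quad_ub (T - P) x
      have h2' := (abs_le.mp h2).1
      have hsplit : x ⬝ᵥ (T *ᵥ x) = x ⬝ᵥ (P *ᵥ x) + x ⬝ᵥ ((T - P) *ᵥ x) := by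
        rw [Matrix.sub_mulVec, dotProduct_sub]; ring
      have hTPc : ‖T - P‖ < c := lt_of_lt_of_le hblP hrc
      have hnormxx : ‖T - P‖ * (x ⬝ᵥ x) < c * (x ⬝ᵥ x) :=
        mul_lt_mul_of_pos_right hTPc hxx
      simp only [star_trivial]
      rw [hsplit]
      nlinarith [h1, h2', hnormxx]
    have hSpsd : S.PosSemidef := by
      rw [hS]; exact conj_posSemidef (fun i => abs_nonneg _)
    have hSSA : S * S = A * A := by
      rw [hS, conj_mul hq', Matrix.diagonal_mul_diagonal, hdec, conj_mul hq',
        Matrix.diagonal_mul_diagonal]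
      congr 2
      funext i
      simp [abs_mul_abs_self]
    have hST : S = T := by
      open scoped MatrixOrder in
      apply (CFC.sq_eq_sq_iff S T hSpsd.nonneg hTpsd.nonneg).mp
      rw [pow_two, pow_two, hSSA, hTTA]
    have hhalf := half_formula (q := q) lam
    rw [← hdec] at hhalf
    rw [hPi A q lam hA hq hdec, ← hhalf, ← hS, hST]
  have hcontsq : ContinuousAt msq zs := by
    simp only [hmsq]
    exact (continuous_id.mul continuous_id).continuousAt
  have htgtzs : msq zs ∈ Φ.target := hPP ▸ hPPtgt
  have h1mem : {A : Matrix (Fin n) (Fin n) ℝ | msq A ∈ Φ.target} ∈ 𝓝 zs :=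
    hcontsq.preimage_mem_nhds (Φ.open_target.mem_nhds htgtzs)
  have hgzs : Φ.symm (msq zs) = P := hPP ▸ hgP
  have hgcont : ContinuousAt (⇑Φ.symm) (msq zs) := hPP ▸ Φ.continuousAt_symm hPPtgt
  have h2mem : {A : Matrix (Fin n) (Fin n) ℝ | Φ.symm (msq A) ∈ Metric.ball P r} ∈ 𝓝 zs := by
    have hcomp : ContinuousAt (fun A => Φ.symm (msq A)) zs := hgcont.comp hcontsq
    apply hcomp.preimage_mem_nhds
    rw [hgzs]
    exact Metric.ball_mem_nhds P hrpos
  have humem : {A : Matrix (Fin n) (Fin n) ℝ | msq A ∈ Φ.target ∧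
      Φ.symm (msq A) ∈ Metric.ball P r} ∈ 𝓝 zs := Filter.inter_mem h1mem h2mem
  have hgd' : DifferentiableAt ℝ (⇑Φ.symm) (msq zs) := hPP ▸ hgd.differentiableAt
  have hmsqd : DifferentiableAt ℝ msq zs := by
    simp only [hmsq]
    exact differentiableAt_fun_id.mul differentiableAt_fun_id
  have hcompd : DifferentiableAt ℝ (fun A => Φ.symm (msq A)) zs := by
    have h1 := DifferentiableAt.comp zs hgd' hmsqd
    exact h1
  have hmodel : DifferentiableAt ℝ
      (fun A : Matrix (Fin n) (Fin n) ℝ => (2⁻¹ : ℝ) • (A + Φ.symm (msq A))) zs :=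
    (differentiableAt_fun_id.fun_add hcompd).fun_const_smul _
  apply hmodel.differentiableWithinAt.congr_of_eventuallyEq
  · filter_upwards [mem_nhdsWithin_of_mem_nhds humem, self_mem_nhdsWithin] with A hAu hAs
    exact key A hAs hAu.1 hAu.2
  · have hzmem := mem_of_mem_nhds humem
    exact key zs hzs hzmem.1 hzmem.2

end Stmt17Aux

theorem stmt_17 {n : ℕ}
    (Pi : Matrix (Fin n) (Fin n) ℝ → Matrix (Fin n) (Fin n) ℝ)
    (hPi : ∀ (A q : Matrix (Fin n) (Fin n) ℝ) (lam : Fin n → ℝ),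
      A.IsHermitian → q * qᵀ = 1 → A = q * Matrix.diagonal lam * qᵀ →
      Pi A = q * Matrix.diagonal (fun i => max (lam i) 0) * qᵀ)
    (zs : Matrix (Fin n) (Fin n) ℝ) (hzs : zs.IsHermitian)
    (heig : ∀ (q : Matrix (Fin n) (Fin n) ℝ) (lam : Fin n → ℝ),
      q * qᵀ = 1 → zs = q * Matrix.diagonal lam * qᵀ → ∀ i, lam i ≠ 0) :
    DifferentiableWithinAt ℝ Pi {A : Matrix (Fin n) (Fin n) ℝ | A.IsHermitian} zs := by
  exact Stmt17Aux.main Pi hPi zs hzs heig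
end

section
/- Let x ∈ Sⁿ be a symmetric matrix. There exist η > 0 and ε > 0 such that for every symmetric y with ‖y - x‖ ≤ ε and every orthogonal q with y = q·Diag(λ_f(y))·qᵀ (eigenvalues in decreasing order), there is an orthogonal p with x = p·Diag(λ_f(x))·pᵀ and ‖p - q‖ ≤ η‖x - y‖. -/
open Matrix
attribute [local instance] Matrix.frobeniusSeminormedAddCommGroup
  Matrix.frobeniusNormedAddCommGroup Matrix.frobeniusNormedSpace

variable {n : ℕ}

lemma sqnorm (M : Matrix (Fin n) (Fin n) ℝ) : ‖M‖ ^ 2 = ∑ i, ∑ j, (M i j) ^ 2 := by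
  rw [frobenius_norm_def]
  have h : ∀ i j, ‖M i j‖ ^ (2:ℝ) = (M i j) ^ 2 := fun i j => by
    rw [show (2:ℝ) = ((2:ℕ):ℝ) by norm_num, Real.rpow_natCast, Real.norm_eq_abs, sq_abs]
  simp_rw [h]
  rw [← Real.rpow_natCast _ 2, ← Real.rpow_mul (by positivity)]
  norm_num

lemma sqnorm_tr (M : Matrix (Fin n) (Fin n) ℝ) : ‖M‖ ^ 2 = trace (Mᵀ * M) := by
  rw [sqnorm, trace]
  simp only [Matrix.diag, Matrix.mul_apply, Matrix.transpose_apply]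
  rw [Finset.sum_comm]
  simp [sq]

lemma norm_eq_of_sq (A B : Matrix (Fin n) (Fin n) ℝ) (h : ‖A‖^2 = ‖B‖^2) : ‖A‖ = ‖B‖ := by
  have := congrArg Real.sqrt h
  rwa [Real.sqrt_sq (norm_nonneg _), Real.sqrt_sq (norm_nonneg _)] at this

lemma norm_le_of_sq (A B : Matrix (Fin n) (Fin n) ℝ) (h : ‖A‖^2 ≤ ‖B‖^2) : ‖A‖ ≤ ‖B‖ := by
  have := Real.sqrt_le_sqrt h
  rwa [Real.sqrt_sq (norm_nonneg _), Real.sqrt_sq (norm_nonneg _)] at this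

lemma norm_mul_left (u M : Matrix (Fin n) (Fin n) ℝ) (hu : uᵀ * u = 1) : ‖u * M‖ = ‖M‖ := by
  apply norm_eq_of_sq
  rw [sqnorm_tr, sqnorm_tr, Matrix.transpose_mul]
  rw [show Mᵀ * uᵀ * (u * M) = Mᵀ * (uᵀ * u) * M by noncomm_ring, hu, Matrix.mul_one]

lemma norm_mul_right (u M : Matrix (Fin n) (Fin n) ℝ) (hu : u * uᵀ = 1) : ‖M * u‖ = ‖M‖ := by
  rw [← frobenius_norm_transpose, Matrix.transpose_mul, ← frobenius_norm_transpose M]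
  exact norm_mul_left _ _ (by rw [Matrix.transpose_transpose, hu])

lemma sqnorm_diag (e : Fin n → ℝ) : ‖Matrix.diagonal e‖^2 = ∑ i, e i ^ 2 := by
  rw [sqnorm]
  refine Finset.sum_congr rfl fun i _ => ?_
  rw [Finset.sum_eq_single i (fun j _ hj => by
    rw [Matrix.diagonal_apply_ne' _ hj]; ring) (by simp)]
  rw [Matrix.diagonal_apply_eq]

lemma real_spectral (x : Matrix (Fin n) (Fin n) ℝ) (hx : x.IsHermitian) :
    ∃ u lam, uᵀ * u = 1 ∧ u * uᵀ = 1 ∧ x = u * Matrix.diagonal lam * uᵀ := by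
  refine ⟨hx.eigenvectorUnitary, hx.eigenvalues, ?_, ?_, ?_⟩
  · simpa [Matrix.star_eq_conjTranspose] using (mem_unitaryGroup_iff'.mp hx.eigenvectorUnitary.2)
  · simpa [Matrix.star_eq_conjTranspose] using (mem_unitaryGroup_iff.mp hx.eigenvectorUnitary.2)
  · simpa [Matrix.star_eq_conjTranspose] using hx.spectral_theorem

lemma conj_diag_mul (w : Matrix (Fin n) (Fin n) ℝ) (hw : wᵀ * w = 1) (a b : Fin n → ℝ) :
    (w * Matrix.diagonal a * wᵀ) * (w * Matrix.diagonal b * wᵀ)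
      = w * Matrix.diagonal (fun i => a i * b i) * wᵀ := by
  have : w * Matrix.diagonal a * wᵀ * (w * Matrix.diagonal b * wᵀ)
      = w * (Matrix.diagonal a * (wᵀ * w) * Matrix.diagonal b) * wᵀ := by noncomm_ring
  rw [this, hw, Matrix.mul_one, Matrix.diagonal_mul_diagonal]

lemma pow_conj (w : Matrix (Fin n) (Fin n) ℝ) (hw : wᵀ * w = 1) (hw' : w * wᵀ = 1)
    (a : Fin n → ℝ) (k : ℕ) :
    (w * Matrix.diagonal a * wᵀ) ^ k = w * Matrix.diagonal (fun i => a i ^ k) * wᵀ := by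
  induction k with
  | zero => simp [hw']
  | succ k ih =>
    rw [pow_succ, ih, conj_diag_mul w hw,
      show (fun i => a i ^ k * a i) = fun i => a i ^ (k+1) from funext fun i => (pow_succ _ _).symm]

lemma conj_sub_one (w : Matrix (Fin n) (Fin n) ℝ) (hw' : w * wᵀ = 1)
    (D : Matrix (Fin n) (Fin n) ℝ) : w * D * wᵀ - 1 = w * (D - 1) * wᵀ := by
  have : w * (D - 1) * wᵀ = w * D * wᵀ - w * wᵀ := by noncomm_ring
  rw [this, hw']

lemma sqrt_lemma (S : Matrix (Fin n) (Fin n) ℝ) (hS : Sᵀ = S) (hK : ‖S - 1‖ ≤ 1/2) :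
    ∃ T Tinv : Matrix (Fin n) (Fin n) ℝ, Tᵀ = T ∧ Tinvᵀ = Tinv ∧ T * T = S ∧
      T * Tinv = 1 ∧ Tinv * T = 1 ∧ ‖T - 1‖ ≤ ‖S - 1‖ ∧
      ∀ R, S * R = R * S → Tinv * R = R * Tinv := by
  have hherm : S.IsHermitian := by
    rw [Matrix.IsHermitian, Matrix.conjTranspose_eq_transpose_of_trivial, hS]
  obtain ⟨w, d, hw1, hw2, hdecomp⟩ := real_spectral S hherm
  have hDnorm : ‖Matrix.diagonal d - 1‖ = ‖S - 1‖ := by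
    conv_rhs => rw [hdecomp, conj_sub_one w hw2]
    rw [norm_mul_right _ _ (by rw [Matrix.transpose_transpose]; exact hw1),
      norm_mul_left _ _ hw1]
  have hsum : ∑ i, (d i - 1)^2 = ‖S - 1‖^2 := by
    rw [← hDnorm, show Matrix.diagonal d - 1 = Matrix.diagonal (fun i => d i - 1) by
      rw [← Matrix.diagonal_one, Matrix.diagonal_sub], sqnorm_diag]
  have hdbound : ∀ i, (d i - 1)^2 ≤ (1/2)^2 := by
    intro i
    have h1 : (d i - 1)^2 ≤ ∑ j, (d j - 1)^2 :=
      Finset.single_le_sum (f := fun j => (d j - 1)^2) (fun j _ => sq_nonneg _)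
        (Finset.mem_univ i)
    have h2 : ‖S - 1‖^2 ≤ (1/2)^2 := by
      apply pow_le_pow_left₀ (norm_nonneg _) hK
    linarith [hsum ▸ h1]
  have hdpos : ∀ i, (1:ℝ)/2 ≤ d i := fun i => by nlinarith [hdbound i]
  have hd0 : ∀ i, (0:ℝ) ≤ d i := fun i => by linarith [hdpos i]
  have hsqrtpos : ∀ i, 0 < Real.sqrt (d i) :=
    fun i => Real.sqrt_pos.mpr (by linarith [hdpos i])
  set T := w * Matrix.diagonal (fun i => Real.sqrt (d i)) * wᵀ with hT
  set Tinv := w * Matrix.diagonal (fun i => (Real.sqrt (d i))⁻¹) * wᵀ with hTinv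
  have hTt : Tᵀ = T := by
    rw [hT]; simp [Matrix.transpose_mul, Matrix.mul_assoc]
  have hTinvt : Tinvᵀ = Tinv := by
    rw [hTinv]; simp [Matrix.transpose_mul, Matrix.mul_assoc]
  have hTT : T * T = S := by
    rw [hT, conj_diag_mul w hw1, hdecomp]
    congr 1
    rw [show (fun i => Real.sqrt (d i) * Real.sqrt (d i)) = d from
      funext fun i => Real.mul_self_sqrt (hd0 i)]
  have hTTinv : T * Tinv = 1 := by
    rw [hT, hTinv, conj_diag_mul w hw1,
      show (fun i => Real.sqrt (d i) * (Real.sqrt (d i))⁻¹) = fun _ => (1:ℝ) from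
        funext fun i => mul_inv_cancel₀ (ne_of_gt (hsqrtpos i)),
      Matrix.diagonal_one, Matrix.mul_one, hw2]
  have hTinvT : Tinv * T = 1 := by
    rw [hTinv, hT, conj_diag_mul w hw1,
      show (fun i => (Real.sqrt (d i))⁻¹ * Real.sqrt (d i)) = fun _ => (1:ℝ) from
        funext fun i => inv_mul_cancel₀ (ne_of_gt (hsqrtpos i)),
      Matrix.diagonal_one, Matrix.mul_one, hw2]
  have hTnorm : ‖T - 1‖ ≤ ‖S - 1‖ := by
    rw [hT, conj_sub_one w hw2,
      norm_mul_right _ _ (by rw [Matrix.transpose_transpose]; exact hw1),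
      norm_mul_left _ _ hw1, ← hDnorm]
    apply norm_le_of_sq
    rw [show Matrix.diagonal (fun i => Real.sqrt (d i)) - 1
        = Matrix.diagonal (fun i => Real.sqrt (d i) - 1) by
      rw [← Matrix.diagonal_one, Matrix.diagonal_sub],
      show Matrix.diagonal d - 1 = Matrix.diagonal (fun i => d i - 1) by
      rw [← Matrix.diagonal_one, Matrix.diagonal_sub],
      sqnorm_diag, sqnorm_diag]
    apply Finset.sum_le_sum
    intro i _
    nlinarith [Real.sq_sqrt (hd0 i), Real.sqrt_nonneg (d i), sq_nonneg (Real.sqrt (d i) - 1)]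
  refine ⟨T, Tinv, hTt, hTinvt, hTT, hTTinv, hTinvT, hTnorm, ?_⟩
  intro R hR
  -- polynomial argument
  set s : Finset ℝ := Finset.image d Finset.univ with hs
  set p : Polynomial ℝ := Lagrange.interpolate s id Real.sqrt with hp
  have hpeval : ∀ i, Polynomial.eval (d i) p = Real.sqrt (d i) := fun i =>
    Lagrange.eval_interpolate_at_node _ (Set.injOn_id _)
      (Finset.mem_image_of_mem d (Finset.mem_univ i))
  have hSk : ∀ k : ℕ, S ^ k = w * Matrix.diagonal (fun i => d i ^ k) * wᵀ := fun k => by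
    rw [hdecomp, pow_conj w hw1 hw2]
  have hTsum : T = ∑ k ∈ Finset.range (p.natDegree + 1), p.coeff k • S ^ k := by
    have : ∀ k ∈ Finset.range (p.natDegree + 1),
        p.coeff k • S ^ k = w * (p.coeff k • Matrix.diagonal (fun i => d i ^ k)) * wᵀ := by
      intro k _
      rw [hSk k, Matrix.mul_smul, Matrix.smul_mul]
    rw [Finset.sum_congr rfl this, ← Finset.sum_mul, ← Matrix.mul_sum, hT]
    congr 2
    have : ∑ k ∈ Finset.range (p.natDegree + 1), p.coeff k • Matrix.diagonal (fun i => d i ^ k)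
        = Matrix.diagonal (fun i => ∑ k ∈ Finset.range (p.natDegree + 1), p.coeff k * d i ^ k) := by
      ext i j
      simp only [Matrix.sum_apply, Matrix.smul_apply, Matrix.diagonal_apply, smul_eq_mul]
      by_cases hij : i = j
      · simp [hij]
      · simp [hij]
    rw [this, show (fun i => ∑ k ∈ Finset.range (p.natDegree + 1), p.coeff k * d i ^ k)
        = fun i => Real.sqrt (d i) from
      funext fun i => by rw [← Polynomial.eval_eq_sum_range, hpeval]]
  have hcommT : T * R = R * T := by
    have hc : Commute R S := Commute.symm hR
    have : Commute R T := by
      rw [hTsum]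
      exact Commute.sum_right _ _ _ fun k _ => ((hc.pow_right k).smul_right _)
    exact this.symm.eq
  calc Tinv * R = Tinv * R * (T * Tinv) := by rw [hTTinv, Matrix.mul_one]
    _ = Tinv * (R * T) * Tinv := by simp only [Matrix.mul_assoc]
    _ = Tinv * (T * R) * Tinv := by rw [hcommT]
    _ = (Tinv * T) * (R * Tinv) := by simp only [Matrix.mul_assoc]
    _ = R * Tinv := by rw [hTinvT, Matrix.one_mul]

lemma my_le_of_sq (a b : ℝ) (ha : 0 ≤ a) (hb : 0 ≤ b) (h : a^2 ≤ b^2) : a ≤ b := by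
  nlinarith

set_option maxHeartbeats 2000000 in
theorem stmt_18 {n : ℕ} (x : Matrix (Fin n) (Fin n) ℝ) (hx : x.IsHermitian) :
    ∃ η ε : ℝ, 0 < η ∧ 0 < ε ∧
      ∀ (y : Matrix (Fin n) (Fin n) ℝ), y.IsHermitian → ‖y - x‖ ≤ ε →
        ∀ (q : Matrix (Fin n) (Fin n) ℝ) (lamy : Fin n → ℝ), q * qᵀ = 1 → Antitone lamy →
          y = q * Matrix.diagonal lamy * qᵀ →
          ∃ (p : Matrix (Fin n) (Fin n) ℝ) (lamx : Fin n → ℝ),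
            p * pᵀ = 1 ∧ Antitone lamx ∧ x = p * Matrix.diagonal lamx * pᵀ ∧
              ‖p - q‖ ≤ η * ‖x - y‖ := by
  obtain ⟨u, lam0, hu1, hu2, hxdecomp⟩ := real_spectral x hx
  by_cases hdeg : ∀ i j : Fin n, lam0 i = lam0 j
  · -- degenerate case: x is a multiple of the identity (or n = 0)
    rcases Nat.eq_zero_or_pos n with hn | hn
    · subst hn
      haveI : Subsingleton (Matrix (Fin 0) (Fin 0) ℝ) := ⟨fun a b => by ext i j; exact i.elim0⟩
      refine ⟨1, 1, one_pos, one_pos, ?_⟩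
      intro y hy hyx q lamy hq hlamy hydec
      refine ⟨q, lamy, hq, hlamy, Subsingleton.elim _ _, ?_⟩
      rw [sub_self, norm_zero, one_mul]
      exact norm_nonneg _
    · set c := lam0 ⟨0, hn⟩ with hc
      have hlamconst : lam0 = fun _ => c := funext fun i => hdeg i ⟨0, hn⟩
      have hdiagc : Matrix.diagonal (fun _ : Fin n => c) = c • (1 : Matrix (Fin n) (Fin n) ℝ) := by
        ext i j
        by_cases hij : i = j
        · subst hij
          simp [Matrix.diagonal_apply_eq, Matrix.smul_apply, Matrix.one_apply_eq]
        · simp [Matrix.diagonal_apply_ne _ hij, Matrix.smul_apply, Matrix.one_apply_ne hij]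
      have hxc : x = c • (1 : Matrix (Fin n) (Fin n) ℝ) := by
        rw [hxdecomp, hlamconst, hdiagc, Matrix.mul_smul, Matrix.smul_mul, Matrix.mul_one, hu2]
      refine ⟨1, 1, one_pos, one_pos, ?_⟩
      intro y hy hyx q lamy hq hlamy hydec
      refine ⟨q, fun _ => c, hq, antitone_const, ?_, ?_⟩
      · rw [hdiagc, Matrix.mul_smul, Matrix.smul_mul, Matrix.mul_one, hq, hxc]
      · rw [sub_self, norm_zero, one_mul]
        exact norm_nonneg _
  · -- main case
    push_neg at hdeg
    set P := Finset.univ.filter (fun ij : Fin n × Fin n => lam0 ij.1 ≠ lam0 ij.2) with hP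
    have hPne : P.Nonempty := by
      obtain ⟨i, j, hij⟩ := hdeg
      exact ⟨(i, j), by simp [hP, hij]⟩
    set δ := P.inf' hPne (fun ij => |lam0 ij.1 - lam0 ij.2|) with hδ
    have hδpos : 0 < δ := by
      rw [hδ, Finset.lt_inf'_iff]
      intro ij hij
      have : lam0 ij.1 ≠ lam0 ij.2 := by simpa [hP] using hij
      exact abs_pos.mpr (sub_ne_zero.mpr this)
    have hδle : ∀ i j, lam0 i ≠ lam0 j → δ ≤ |lam0 i - lam0 j| := by
      intro i j hij
      rw [hδ]
      exact Finset.inf'_le _ (show (i,j) ∈ P by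
        rw [hP]; exact Finset.mem_filter.mpr ⟨Finset.mem_univ _, hij⟩)
    refine ⟨(4*n+6)/δ, δ/(8*(n+1)), by positivity, by positivity, ?_⟩
    intro y hy hyxnorm q lamy hq hlamy hydec
    have hq' : qᵀ * q = 1 := mul_eq_one_comm.mp hq
    set N := ‖x - y‖ with hN
    have hN0 : 0 ≤ N := norm_nonneg _
    have hNε : N ≤ δ/(8*(n+1)) := by rw [hN, norm_sub_rev]; exact hyxnorm
    have hn1 : (0:ℝ) ≤ (n:ℝ) := Nat.cast_nonneg n
    have hN8 : N ≤ δ/8 := by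
      refine le_trans hNε (div_le_div_of_nonneg_left hδpos.le (by norm_num) (by nlinarith))
    obtain ⟨h, hhdef⟩ : ∃ h, h = uᵀ * q := ⟨_, rfl⟩
    have hh1 : hᵀ * h = 1 := by
      rw [hhdef, Matrix.transpose_mul, Matrix.transpose_transpose,
        show qᵀ * u * (uᵀ * q) = qᵀ * (u * uᵀ) * q by noncomm_ring, hu2, Matrix.mul_one, hq']
    have hh2 : h * hᵀ = 1 := mul_eq_one_comm.mp hh1
    have hcol : ∀ j, ∑ i, (h i j)^2 = 1 := by
      intro j
      have := congrFun (congrFun hh1 j) j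
      simpa [Matrix.mul_apply, Matrix.one_apply, sq] using this
    -- the key identity
    have hkey : Matrix.diagonal lam0 * h - h * Matrix.diagonal lamy = uᵀ * (x - y) * q := by
      rw [Matrix.mul_sub, Matrix.sub_mul]
      congr 1
      · conv_rhs => rw [hxdecomp]
        rw [hhdef, show uᵀ * (u * Matrix.diagonal lam0 * uᵀ) * q
            = (uᵀ * u) * Matrix.diagonal lam0 * (uᵀ * q) by noncomm_ring, hu1, Matrix.one_mul]
      · conv_rhs => rw [hydec]
        rw [hhdef, show uᵀ * (q * Matrix.diagonal lamy * qᵀ) * q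
            = (uᵀ * q) * Matrix.diagonal lamy * (qᵀ * q) by noncomm_ring, hq', Matrix.mul_one]
    have hkeynorm : ‖Matrix.diagonal lam0 * h - h * Matrix.diagonal lamy‖ = N := by
      rw [hkey, hN, norm_mul_right _ _ hq,
        norm_mul_left _ _ (by rw [Matrix.transpose_transpose]; exact hu2)]
    have hentry : ∀ i j, (Matrix.diagonal lam0 * h - h * Matrix.diagonal lamy) i j
        = (lam0 i - lamy j) * h i j := by
      intro i j
      rw [Matrix.sub_apply, Matrix.diagonal_mul, Matrix.mul_diagonal]
      ring
    have hsumkey : ∑ i, ∑ j, (lam0 i - lamy j)^2 * (h i j)^2 = N^2 := by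
      rw [← hkeynorm, sqnorm]
      refine Finset.sum_congr rfl fun i _ => Finset.sum_congr rfl fun j _ => ?_
      rw [hentry i j, mul_pow]
    -- coverage: every lamy j is close to some eigenvalue of x
    have hcover : ∀ j, ∃ i, |lam0 i - lamy j| < δ/2 := by
      intro j
      by_contra hno
      push_neg at hno
      have h1 : (δ/2)^2 ≤ ∑ i, (lam0 i - lamy j)^2 * (h i j)^2 := by
        calc (δ/2)^2 = (δ/2)^2 * ∑ i, (h i j)^2 := by rw [hcol j, mul_one]
        _ = ∑ i, (δ/2)^2 * (h i j)^2 := Finset.mul_sum _ _ _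
        _ ≤ ∑ i, (lam0 i - lamy j)^2 * (h i j)^2 := by
            refine Finset.sum_le_sum fun i _ => ?_
            refine mul_le_mul_of_nonneg_right ?_ (sq_nonneg _)
            have := hno i
            calc (δ/2)^2 ≤ |lam0 i - lamy j|^2 :=
              pow_le_pow_left₀ (by positivity) this 2
            _ = (lam0 i - lamy j)^2 := sq_abs _
      have h2 : ∑ i, (lam0 i - lamy j)^2 * (h i j)^2
          ≤ ∑ j', ∑ i, (lam0 i - lamy j')^2 * (h i j')^2 :=
        Finset.single_le_sum (f := fun j' => ∑ i, (lam0 i - lamy j')^2 * (h i j')^2)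
          (fun j' _ => Finset.sum_nonneg fun i _ => by positivity) (Finset.mem_univ j)
      rw [Finset.sum_comm] at hsumkey
      have h3 : (δ/2)^2 ≤ N^2 := by linarith [hsumkey ▸ h2]
      have h6 : N^2 ≤ (δ/8)^2 := pow_le_pow_left₀ hN0 hN8 2
      nlinarith [hδpos]
    choose iv hiv using hcover
    obtain ⟨ν, hνdef⟩ : ∃ ν : Fin n → ℝ, ν = fun j => lam0 (iv j) := ⟨_, rfl⟩
    have hνiv : ∀ j, |ν j - lamy j| < δ/2 := fun j => by rw [hνdef]; exact hiv j
    have hνeq : ∀ j, ν j = lam0 (iv j) := fun j => by rw [hνdef]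
    have hνanti : Antitone ν := by
      intro j j' hjj'
      by_contra hlt
      push_neg at hlt
      have hne : lam0 (iv j) ≠ lam0 (iv j') := by
        rw [← hνeq, ← hνeq]; exact ne_of_lt hlt
      have hgap : δ ≤ |ν j - ν j'| := by rw [hνeq j, hνeq j']; exact hδle _ _ hne
      have h1 := abs_lt.mp (hνiv j)
      have h2 := abs_lt.mp (hνiv j')
      have h3 : lamy j' ≤ lamy j := hlamy hjj'
      rcases abs_cases (ν j - ν j') with hcase | hcase <;> rw [hcase.1] at hgap <;> linarith
    -- the matrix A
    obtain ⟨A, hAdef⟩ : ∃ A : Matrix (Fin n) (Fin n) ℝ,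
        A = Matrix.of (fun i j => if lam0 i = ν j then h i j else 0) := ⟨_, rfl⟩
    have hAapp : ∀ i j, A i j = if lam0 i = ν j then h i j else 0 := by
      intro i j; rw [hAdef]; rfl
    -- bound on e = ‖A - h‖
    obtain ⟨e, hedef⟩ : ∃ e, e = ‖A - h‖ := ⟨_, rfl⟩
    have he0 : 0 ≤ e := hedef ▸ norm_nonneg _
    have hesq : (δ/2)^2 * e^2 ≤ N^2 := by
      rw [hedef, sqnorm, Finset.mul_sum]
      rw [← hsumkey]
      refine Finset.sum_le_sum fun i _ => ?_
      rw [Finset.mul_sum]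
      refine Finset.sum_le_sum fun j _ => ?_
      rw [Matrix.sub_apply, hAapp i j]
      by_cases hc : lam0 i = ν j
      · simp only [hc, if_pos]
        have : ν j - ν j = 0 := sub_self _
        rw [sub_self]
        simp only [ne_eq, OfNat.ofNat_ne_zero, not_false_eq_true, zero_pow, mul_zero]
        positivity
      · rw [if_neg hc]
        have hνeig : ν j = lam0 (iv j) := hνeq j
        have hne : lam0 i ≠ lam0 (iv j) := by rw [← hνeig]; exact hc
        have hgap := hδle _ _ hne
        have htri : |lam0 i - lam0 (iv j)| ≤ |lam0 i - lamy j| + |lamy j - lam0 (iv j)| :=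
          abs_sub_le _ _ _
        have h2 : |lamy j - lam0 (iv j)| < δ/2 := by
          rw [abs_sub_comm, ← hνeig]; exact hνiv j
        have h3 : δ/2 ≤ |lam0 i - lamy j| := by linarith
        have h4 : (δ/2)^2 ≤ (lam0 i - lamy j)^2 := by
          rw [← sq_abs (lam0 i - lamy j)]
          exact pow_le_pow_left₀ (by positivity) h3 2
        have h5 : (0 - h i j)^2 = (h i j)^2 := by ring
        rw [h5]
        exact mul_le_mul_of_nonneg_right h4 (sq_nonneg _)
    have heN : δ/2 * e ≤ N := by
      refine my_le_of_sq _ _ (by positivity) hN0 ?_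
      calc (δ/2*e)^2 = (δ/2)^2 * e^2 := by ring
      _ ≤ N^2 := hesq
    have hee : e * (4*((n:ℝ)+1)) ≤ 1 := by
      have h1 : δ/2 * e * (8*((n:ℝ)+1)) ≤ δ/(8*((n:ℝ)+1)) * (8*((n:ℝ)+1)) :=
        mul_le_mul_of_nonneg_right (le_trans heN hNε) (by positivity)
      rw [div_mul_cancel₀ _ (by positivity : (8*((n:ℝ)+1)) ≠ 0)] at h1
      have h2 : δ * (e * (4*((n:ℝ)+1))) ≤ δ * 1 := by linarith
      exact le_of_mul_le_mul_left h2 hδpos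
    have he1 : e ≤ 1 := by nlinarith [mul_nonneg he0 hn1]
    -- norms of h and A
    obtain ⟨b, hbdef⟩ : ∃ b, b = ‖h‖ := ⟨_, rfl⟩
    have hb0 : 0 ≤ b := hbdef ▸ norm_nonneg _
    have hb2 : b^2 = n := by
      rw [hbdef, sqnorm_tr, hh1, Matrix.trace_one]
      simp
    have hbn : b ≤ (n:ℝ) := by
      have : (n:ℝ) ≤ (n:ℝ)^2 := by
        have := Nat.le_self_pow (two_ne_zero) n
        exact_mod_cast this
      nlinarith
    have hAnorm : ‖A‖ ≤ b + e := by
      calc ‖A‖ = ‖h + (A - h)‖ := by rw [add_sub_cancel]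
      _ ≤ ‖h‖ + ‖A - h‖ := norm_add_le _ _
      _ = b + e := by rw [hbdef, hedef]
    -- bound on K = ‖AᵀA - 1‖
    have hKdecomp : Aᵀ * A - 1 = Aᵀ * (A - h) + (A - h)ᵀ * h := by
      rw [← hh1, Matrix.transpose_sub]; noncomm_ring
    have hK : ‖Aᵀ * A - 1‖ ≤ (2*b + 1) * e := by
      rw [hKdecomp]
      calc ‖Aᵀ * (A - h) + (A - h)ᵀ * h‖ ≤ ‖Aᵀ * (A - h)‖ + ‖(A - h)ᵀ * h‖ := norm_add_le _ _
      _ ≤ ‖Aᵀ‖ * ‖A - h‖ + ‖(A - h)ᵀ‖ * ‖h‖ :=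
          add_le_add (frobenius_norm_mul _ _) (frobenius_norm_mul _ _)
      _ = ‖A‖ * e + e * b := by
          rw [frobenius_norm_transpose, frobenius_norm_transpose, ← hedef, ← hbdef]
      _ ≤ (b + e) * e + e * b :=
          add_le_add_left (mul_le_mul_of_nonneg_right hAnorm he0) _
      _ ≤ (2*b + 1) * e := by nlinarith
    have hKhalf : ‖Aᵀ * A - 1‖ ≤ 1/2 := by
      have h1 : (2*b+1)*e ≤ (2*(n:ℝ)+2)*e := by nlinarith
      have h2 : (2*(n:ℝ)+2)*e ≤ 1/2 := by nlinarith [hee, he0]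
      linarith [hK]
    -- structure of A
    have hsymS : (Aᵀ * A)ᵀ = Aᵀ * A := by
      rw [Matrix.transpose_mul, Matrix.transpose_transpose]
    have hΛA : Matrix.diagonal lam0 * A = A * Matrix.diagonal ν := by
      ext i j
      rw [Matrix.diagonal_mul, Matrix.mul_diagonal, hAapp i j]
      by_cases hc : lam0 i = ν j
      · rw [if_pos hc, hc]; ring
      · rw [if_neg hc]; ring
    have hScomm : (Aᵀ * A) * Matrix.diagonal ν = Matrix.diagonal ν * (Aᵀ * A) := by
      ext j j'
      rw [Matrix.mul_diagonal, Matrix.diagonal_mul]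
      by_cases hc : ν j = ν j'
      · rw [hc]; ring
      · have hzero : (Aᵀ * A) j j' = 0 := by
          rw [Matrix.mul_apply]
          refine Finset.sum_eq_zero fun i _ => ?_
          rw [Matrix.transpose_apply, hAapp i j, hAapp i j']
          by_cases h1 : lam0 i = ν j
          · rw [if_neg (show ¬ lam0 i = ν j' from fun h2 => hc (h1.symm.trans h2))]; ring
          · rw [if_neg h1]; ring
        rw [hzero]; ring
    -- take the square root
    obtain ⟨T, Ti, hTt, hTit, hTT, hTTi, hTiT, hTn, hTcomm⟩ :=
      sqrt_lemma (Aᵀ * A) hsymS hKhalf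
    have hTiDν : Ti * Matrix.diagonal ν = Matrix.diagonal ν * Ti := hTcomm _ hScomm
    obtain ⟨g, hgdef⟩ : ∃ g, g = A * Ti := ⟨_, rfl⟩
    have hgtg : gᵀ * g = 1 := by
      calc gᵀ * g = Ti * (Aᵀ * A) * Ti := by
            rw [hgdef, Matrix.transpose_mul, hTit]; noncomm_ring
      _ = Ti * (T * T) * Ti := by rw [hTT]
      _ = (Ti * T) * (T * Ti) := by noncomm_ring
      _ = 1 := by rw [hTiT, hTTi, Matrix.one_mul]
    have hggt : g * gᵀ = 1 := mul_eq_one_comm.mp hgtg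
    obtain ⟨p, hpdef⟩ : ∃ p, p = u * g := ⟨_, rfl⟩
    have hppt : p * pᵀ = 1 := by
      rw [hpdef, Matrix.transpose_mul,
        show u * g * (gᵀ * uᵀ) = u * (g * gᵀ) * uᵀ by noncomm_ring, hggt, Matrix.mul_one, hu2]
    -- x = p * diagonal ν * pᵀ
    have hgT : g * T = A := by
      rw [hgdef, Matrix.mul_assoc, hTiT, Matrix.mul_one]
    have hxp : x * p = p * Matrix.diagonal ν := by
      calc x * p = u * Matrix.diagonal lam0 * (uᵀ * u) * g := by
            rw [hxdecomp, hpdef]; noncomm_ring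
      _ = u * (Matrix.diagonal lam0 * A) * Ti := by
            rw [hu1, Matrix.mul_one, hgdef]; noncomm_ring
      _ = u * A * (Matrix.diagonal ν * Ti) := by rw [hΛA]; noncomm_ring
      _ = u * A * (Ti * Matrix.diagonal ν) := by rw [hTiDν]
      _ = p * Matrix.diagonal ν := by rw [hpdef, hgdef]; noncomm_ring
    have hxdiag : x = p * Matrix.diagonal ν * pᵀ := by
      calc x = x * (p * pᵀ) := by rw [hppt, Matrix.mul_one]
      _ = (x * p) * pᵀ := by rw [Matrix.mul_assoc]
      _ = p * Matrix.diagonal ν * pᵀ := by rw [hxp]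
    -- the norm bound
    have hq_uh : u * h = q := by
      rw [hhdef, ← Matrix.mul_assoc, hu2, Matrix.one_mul]
    have hpq : p - q = u * (g - h) := by
      rw [hpdef, ← hq_uh, Matrix.mul_sub]
    have hnormpq : ‖p - q‖ = ‖g - h‖ := by
      rw [hpq, norm_mul_left _ _ hu1]
    have hgA : ‖g - A‖ ≤ ‖Aᵀ * A - 1‖ := by
      have h1 : g - A = g * (1 - T) := by
        rw [Matrix.mul_sub, Matrix.mul_one, hgT]
      rw [h1, norm_mul_left _ _ hgtg, norm_sub_rev]
      exact hTn
    have hfinal : ‖g - h‖ ≤ (2*b + 2) * e := by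
      calc ‖g - h‖ = ‖(g - A) + (A - h)‖ := by rw [sub_add_sub_cancel]
      _ ≤ ‖g - A‖ + ‖A - h‖ := norm_add_le _ _
      _ ≤ (2*b + 1) * e + e := by
          refine add_le_add (le_trans hgA hK) (le_of_eq hedef.symm)
      _ = (2*b + 2) * e := by ring
    refine ⟨p, ν, hppt, hνanti, hxdiag, ?_⟩
    rw [hnormpq]
    calc ‖g - h‖ ≤ (2*b + 2) * e := hfinal
    _ ≤ (2*(n:ℝ) + 2) * e := by nlinarith
    _ ≤ (4*n+6)/δ * N := by
        rw [div_mul_eq_mul_div, le_div_iff₀ hδpos]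
        nlinarith [heN, hδpos]
end

section
/- For t > 0 and x ∈ ℝ^{m×n} with m ≤ n and ‖x‖ < t (operator norm), the (m+n)×(m+n) block matrix [[tIₙ, xᵀ],[x, tIₘ]] is positive definite, and its determinant equals t^{n-m} · ∏_{i=1}^m (t² - σᵢ(x)²), where σ₁(x),...,σ_m(x) are the singular values of x. -/
open Matrix

/-- The operator (spectral) norm of a real rectangular matrix. -/
noncomputable def matrixOpNorm {m n : ℕ} (z : Matrix (Fin m) (Fin n) ℝ) : ℝ :=
  ‖LinearMap.toContinuousLinearMap (Matrix.toEuclideanLin z)‖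

namespace StmtAux19

lemma norm_mulVec_le {m n : ℕ} (x : Matrix (Fin m) (Fin n) ℝ) (v : EuclideanSpace ℝ (Fin n)) :
    ‖Matrix.toEuclideanLin x v‖ ≤ matrixOpNorm x * ‖v‖ := by
  simpa [matrixOpNorm] using
    (LinearMap.toContinuousLinearMap (Matrix.toEuclideanLin x)).le_opNorm v

lemma quad_le {m n : ℕ} (x : Matrix (Fin m) (Fin n) ℝ) (v : Fin m → ℝ) :
    v ⬝ᵥ ((x * xᴴ) *ᵥ v) ≤ matrixOpNorm x ^ 2 * (v ⬝ᵥ v) := by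
  have hC : (0:ℝ) ≤ matrixOpNorm x := norm_nonneg _
  set w : Fin n → ℝ := xᴴ *ᵥ v with hw
  have h1 : (x * xᴴ) *ᵥ v = x *ᵥ w := (mulVec_mulVec v x xᴴ).symm
  have h2 : v ⬝ᵥ (x *ᵥ w) = w ⬝ᵥ w := by
    rw [dotProduct_mulVec]
    congr 1
    rw [hw, conjTranspose_eq_transpose_of_trivial, mulVec_transpose]
  set v' : EuclideanSpace ℝ (Fin m) := (WithLp.equiv 2 (Fin m → ℝ)).symm v with hv'
  set w' : EuclideanSpace ℝ (Fin n) := (WithLp.equiv 2 (Fin n → ℝ)).symm w with hw'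
  have hvv : v ⬝ᵥ v = ‖v'‖ ^ 2 := by
    rw [← real_inner_self_eq_norm_sq, hv', EuclideanSpace.inner_eq_star_dotProduct]
    simp
  have hww : w ⬝ᵥ w = ‖w'‖ ^ 2 := by
    rw [← real_inner_self_eq_norm_sq, hw', EuclideanSpace.inner_eq_star_dotProduct]
    simp
  have hxw : ‖((WithLp.equiv 2 (Fin m → ℝ)).symm (x *ᵥ w) : EuclideanSpace ℝ (Fin m))‖
      ≤ matrixOpNorm x * ‖w'‖ := by
    simpa [hw', Matrix.toLpLin_toLp] using
      norm_mulVec_le x ((WithLp.equiv 2 (Fin n → ℝ)).symm w)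
  have hcs : v ⬝ᵥ (x *ᵥ w) ≤ ‖v'‖ * (matrixOpNorm x * ‖w'‖) := by
    have : v ⬝ᵥ (x *ᵥ w)
        = inner ℝ v' ((WithLp.equiv 2 (Fin m → ℝ)).symm (x *ᵥ w) : EuclideanSpace ℝ (Fin m)) := by
      rw [hv', EuclideanSpace.inner_eq_star_dotProduct]
      simp [dotProduct_comm]
    rw [this]
    calc inner ℝ v' ((WithLp.equiv 2 (Fin m → ℝ)).symm (x *ᵥ w) : EuclideanSpace ℝ (Fin m))
        ≤ ‖v'‖ * ‖((WithLp.equiv 2 (Fin m → ℝ)).symm (x *ᵥ w) : EuclideanSpace ℝ (Fin m))‖ :=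
          real_inner_le_norm _ _
      _ ≤ ‖v'‖ * (matrixOpNorm x * ‖w'‖) := by
          exact mul_le_mul_of_nonneg_left hxw (norm_nonneg _)
  have key : ‖w'‖ ^ 2 ≤ ‖v'‖ * (matrixOpNorm x * ‖w'‖) := by
    rw [← hww, ← h2]; exact hcs
  rw [h1, h2, hww, hvv]
  nlinarith [norm_nonneg w', norm_nonneg v', sq_nonneg (‖w'‖ - matrixOpNorm x * ‖v'‖)]

lemma posDef_smul {p : Type*} [Fintype p] {M : Matrix p p ℝ} (hM : M.PosDef) {c : ℝ}
    (hc : 0 < c) : (c • M).PosDef := by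
  refine Matrix.PosDef.of_dotProduct_mulVec_pos ?_ (fun v hv => ?_)
  · unfold Matrix.IsHermitian
    rw [conjTranspose_smul, hM.1.eq]
    simp
  · rw [smul_mulVec, dotProduct_smul, smul_eq_mul]
    exact mul_pos hc (hM.dotProduct_mulVec_pos hv)

lemma posDef_fromBlocks₁₁ {p q : Type*} [Fintype p] [DecidableEq p] [Fintype q] [DecidableEq q]
    {A : Matrix p p ℝ} (B : Matrix p q ℝ) {D : Matrix q q ℝ} (hA : A.PosDef) [Invertible A]
    (hS : (D - Bᴴ * A⁻¹ * B).PosDef) : (fromBlocks A B Bᴴ D).PosDef := by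
  refine Matrix.PosDef.of_dotProduct_mulVec_pos ((IsHermitian.fromBlocks₁₁ B D hA.1).mpr hS.1) (fun z hz => ?_)
  rw [dotProduct_mulVec, ← Sum.elim_comp_inl_inr z, schur_complement_eq₁₁ B D _ _ hA.1,
    ← dotProduct_mulVec, ← dotProduct_mulVec]
  by_cases hv : z ∘ Sum.inr = 0
  · have hu : z ∘ Sum.inl ≠ 0 := by
      intro hu0
      apply hz
      funext i
      cases i with
      | inl i => exact congrFun hu0 i
      | inr i => exact congrFun hv i
    rw [hv]
    simp only [mulVec_zero, add_zero, star_zero, zero_dotProduct]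
    exact hA.dotProduct_mulVec_pos hu
  · exact add_pos_of_nonneg_of_pos ((posSemidef_iff_dotProduct_mulVec.mp hA.posSemidef).2 _) (hS.dotProduct_mulVec_pos hv)

end StmtAux19

open StmtAux19 in
theorem stmt_19 {m n : ℕ} (hmn : m ≤ n) (t : ℝ) (ht : 0 < t)
    (x : Matrix (Fin m) (Fin n) ℝ) (hx : matrixOpNorm x < t) :
    (Matrix.fromBlocks (t • (1 : Matrix (Fin n) (Fin n) ℝ)) xᵀ x
        (t • (1 : Matrix (Fin m) (Fin m) ℝ))).PosDef ∧
      (Matrix.fromBlocks (t • (1 : Matrix (Fin n) (Fin n) ℝ)) xᵀ x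
          (t • (1 : Matrix (Fin m) (Fin m) ℝ))).det
        = t ^ (n - m) *
          ∏ i : Fin m, (t ^ 2 - (Matrix.isHermitian_mul_conjTranspose_self x).eigenvalues i) := by
  classical
  have hC0 : (0:ℝ) ≤ matrixOpNorm x := norm_nonneg _
  have h := Matrix.isHermitian_mul_conjTranspose_self x
  have hxT : (xᵀ)ᴴ = x := by
    rw [conjTranspose_eq_transpose_of_trivial, transpose_transpose]
  have hxH : xᴴ = xᵀ := conjTranspose_eq_transpose_of_trivial x
  -- S is positive definite
  have hSpos : (t ^ 2 • (1 : Matrix (Fin m) (Fin m) ℝ) - x * xᴴ).PosDef := by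
    refine Matrix.PosDef.of_dotProduct_mulVec_pos ?_ (fun v hv => ?_)
    · have h1 : (t ^ 2 • (1 : Matrix (Fin m) (Fin m) ℝ)).IsHermitian := by
        unfold Matrix.IsHermitian
        rw [conjTranspose_smul, conjTranspose_one]
        simp
      exact h1.sub h
    · have hsv : star v = v := by funext i; exact star_trivial _
      rw [hsv, sub_mulVec, dotProduct_sub, smul_mulVec, one_mulVec, dotProduct_smul,
        smul_eq_mul]
      have hvv : 0 < v ⬝ᵥ v := by
        have h0 : 0 < star v ⬝ᵥ v := dotProduct_star_self_pos_iff.mpr hv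
        rwa [hsv] at h0
      have hq := quad_le x v
      have hCt2 : matrixOpNorm x ^ 2 < t ^ 2 := by nlinarith
      have hmul := mul_pos (sub_pos.mpr hCt2) hvv
      nlinarith
  -- determinant of S via spectral theorem
  have hdetS : (t ^ 2 • (1 : Matrix (Fin m) (Fin m) ℝ) - x * xᴴ).det
      = ∏ i : Fin m, (t ^ 2 - h.eigenvalues i) := by
    have hsp : star (h.eigenvectorUnitary : Matrix (Fin m) (Fin m) ℝ) * (x * xᴴ)
        * (h.eigenvectorUnitary : Matrix (Fin m) (Fin m) ℝ)
        = diagonal (RCLike.ofReal ∘ h.eigenvalues) := by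
      have := h.conjStarAlgAut_star_eigenvectorUnitary
      rwa [Unitary.conjStarAlgAut_star_apply] at this
    set U : Matrix (Fin m) (Fin m) ℝ := (h.eigenvectorUnitary : Matrix (Fin m) (Fin m) ℝ)
      with hUdef
    have hU : star U * U = 1 := Matrix.UnitaryGroup.star_mul_self h.eigenvectorUnitary
    have key : star U * (t ^ 2 • (1 : Matrix (Fin m) (Fin m) ℝ) - x * xᴴ) * U
        = diagonal (fun i => t ^ 2 - h.eigenvalues i) := by
      have h1 : star U * (t ^ 2 • (1 : Matrix (Fin m) (Fin m) ℝ)) * U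
          = t ^ 2 • (1 : Matrix (Fin m) (Fin m) ℝ) := by
        rw [Matrix.mul_smul, Matrix.mul_one, Matrix.smul_mul, hU]
      rw [Matrix.mul_sub, Matrix.sub_mul, h1, hsp]
      ext i j
      rcases eq_or_ne i j with rfl | hij
      · simp [Matrix.one_apply, diagonal_apply]
      · simp [Matrix.one_apply, diagonal_apply, hij]
    have hdet1 : det (star U) * det U = 1 := by rw [← det_mul, hU, det_one]
    calc det (t ^ 2 • (1 : Matrix (Fin m) (Fin m) ℝ) - x * xᴴ)
        = det (star U) * det U * det (t ^ 2 • (1 : Matrix (Fin m) (Fin m) ℝ) - x * xᴴ) := by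
          rw [hdet1, one_mul]
      _ = det (star U * (t ^ 2 • (1 : Matrix (Fin m) (Fin m) ℝ) - x * xᴴ) * U) := by
          rw [det_mul, det_mul]; ring
      _ = det (diagonal fun i => t ^ 2 - h.eigenvalues i) := by rw [key]
      _ = ∏ i : Fin m, (t ^ 2 - h.eigenvalues i) := det_diagonal
  -- the top-left block
  have hA : (t • (1 : Matrix (Fin n) (Fin n) ℝ)).PosDef := posDef_smul Matrix.PosDef.one ht
  haveI : Invertible (t • (1 : Matrix (Fin n) (Fin n) ℝ)) := hA.isUnit.invertible
  have hAinv : (t • (1 : Matrix (Fin n) (Fin n) ℝ))⁻¹ = t⁻¹ • 1 := by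
    apply inv_eq_right_inv
    rw [Matrix.smul_mul, Matrix.mul_smul, Matrix.one_mul, smul_smul,
      mul_inv_cancel₀ ht.ne', one_smul]
  -- the Schur complement
  have ht2 : t⁻¹ * t ^ 2 = t := by
    rw [sq, ← mul_assoc, inv_mul_cancel₀ ht.ne', one_mul]
  have hSchur' : t • (1 : Matrix (Fin m) (Fin m) ℝ)
        - x * (t⁻¹ • (1 : Matrix (Fin n) (Fin n) ℝ)) * xᵀ
      = t⁻¹ • (t ^ 2 • (1 : Matrix (Fin m) (Fin m) ℝ) - x * xᴴ) := by
    rw [hxH, Matrix.mul_smul, Matrix.mul_one, Matrix.smul_mul, smul_sub, smul_smul, ht2]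
  have hSchurPos : (t • (1 : Matrix (Fin m) (Fin m) ℝ)
      - (xᵀ)ᴴ * (t • (1 : Matrix (Fin n) (Fin n) ℝ))⁻¹ * xᵀ).PosDef := by
    rw [hxT, hAinv, hSchur']
    exact posDef_smul hSpos (inv_pos.mpr ht)
  have hBlock := posDef_fromBlocks₁₁ xᵀ hA hSchurPos
  rw [hxT] at hBlock
  refine ⟨hBlock, ?_⟩
  rw [det_fromBlocks₁₁, invOf_eq_nonsing_inv, hAinv, hSchur']
  have hdetA : det (t • (1 : Matrix (Fin n) (Fin n) ℝ)) = t ^ n := by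
    simp [det_smul]
  have hdetB : (t⁻¹ • (t ^ 2 • (1 : Matrix (Fin m) (Fin m) ℝ) - x * xᴴ)).det
      = (t⁻¹) ^ m * ∏ i : Fin m, (t ^ 2 - h.eigenvalues i) := by
    rw [det_smul, hdetS]
    simp
  rw [hdetA, hdetB]
  have hpow : t ^ n * (t⁻¹) ^ m = t ^ (n - m) := by
    rw [inv_pow, ← div_eq_mul_inv]
    exact (pow_sub₀ t ht.ne' hmn).symm
  rw [← mul_assoc, hpow]
end
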